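/- arXiv:1605.05089 — 12 statements merged into one kernel-verified Lean document; each statement's English description precedes it below -/
import Mathlib

section
/- Let a ∈ R, let χ ∈ Σ_a, and let u : R → Rˣ be any function such that x − u(x) ∈ ann(a) for every x ∈ F_a (such a function exists). Then λ_χ = ∑_{x∈F_a} β(x)·χ(u(x)) is an eigenvalue of B_R, i.e. a root of the characteristic polynomial of B_R regarded as a complex matrix. -/
/-!
A character `χ` of `Rˣ` that is trivial on `1 + ann(a)` is really a character of `Q_aˣ`;
extending it by zero outside `F_a` (using the lift `u`) gives a completely multiplicative
function `w : R → ℂ` with `w 1 ≠ 0`. Every completely multiplicative `w` is an eigenvector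
of `B_R`, since `(B_R w)(c) = ∑ₓ β(x) w(c x) = (∑ₓ β(x) w(x)) · w(c)`.
-/

open Finset Polynomial

open scoped Classical

/-- The multiplication part `B_R` of the transition matrix:
`B_R(a,b) = ∑_{x ∈ R : a·x = b} β(x)`. -/
noncomputable def Bmat (R : Type) [CommRing R] [Fintype R] (β : R → ℝ) :
    Matrix R R ℝ :=
  fun a b => ∑ x ∈ Finset.univ.filter (fun x => a * x = b), β x

/-- The annihilator ideal `ann(a) = {x ∈ R : x·a = 0}`. -/
def annId {R : Type} [CommRing R] (a : R) : Ideal R where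
  carrier := {x | x * a = 0}
  add_mem' := by
    intro x y hx hy
    simp only [Set.mem_setOf_eq] at *
    rw [add_mul, hx, hy, add_zero]
  zero_mem' := by simp
  smul_mem' := by
    intro c x hx
    simp only [smul_eq_mul, Set.mem_setOf_eq] at *
    rw [mul_assoc, hx, mul_zero]

open Matrix

theorem Matrix.isRoot_charpoly_of_mulVec_eq_smul {K n : Type*} [Field K] [Fintype n]
    [DecidableEq n] {M : Matrix n n K} {v : n → K} {μ : K} (hv : v ≠ 0)
    (hMv : M *ᵥ v = μ • v) : M.charpoly.IsRoot μ := by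
  rw [← Matrix.charpoly_toLin', ← Module.End.hasEigenvalue_iff_isRoot_charpoly]
  refine Module.End.hasEigenvalue_of_hasEigenvector (x := v) ⟨?_, hv⟩
  rwa [Module.End.mem_eigenspace_iff, Matrix.toLin'_apply]

section Bmat

variable {R : Type} [CommRing R] [Fintype R] (β : R → ℝ)

theorem Bmat_map_mulVec_apply (w : R → ℂ) (c : R) :
    ((Bmat R β).map (fun t : ℝ => (t : ℂ)) *ᵥ w) c = ∑ x, (β x : ℂ) * w (c * x) := by
  simp only [Matrix.mulVec, dotProduct, Matrix.map_apply, Bmat, Complex.ofReal_sum,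
    Finset.sum_mul]
  rw [← Finset.sum_fiberwise Finset.univ (fun x => c * x) fun x => (β x : ℂ) * w (c * x)]
  refine Finset.sum_congr rfl fun b _ => Finset.sum_congr rfl fun x hx => ?_
  rw [(Finset.mem_filter.mp hx).2]

theorem Bmat_map_mulVec_of_map_mul {w : R → ℂ} (hw : ∀ c x, w (c * x) = w c * w x) :
    (Bmat R β).map (fun t : ℝ => (t : ℂ)) *ᵥ w = (∑ x, (β x : ℂ) * w x) • w := by
  funext c
  rw [Bmat_map_mulVec_apply, Pi.smul_apply, smul_eq_mul, Finset.sum_mul]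
  refine Finset.sum_congr rfl fun x _ => ?_
  rw [hw, mul_comm (w c), mul_assoc]

end Bmat

section UnitsModIdeal

variable {R G : Type*} [CommRing R] [CommGroup G] {I : Ideal R} {χ : Rˣ →* G}

theorem MonoidHom.map_eq_of_sub_mem (hχ : ∀ v : Rˣ, (v : R) - 1 ∈ I → χ v = 1)
    {v w : Rˣ} (hvw : (v : R) - w ∈ I) : χ v = χ w := by
  have h : ((v * w⁻¹ : Rˣ) : R) - 1 = ((v : R) - w) * (w⁻¹ : Rˣ) := by
    rw [sub_mul, Units.val_mul, Units.mul_inv]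
  rw [← div_eq_one, ← _root_.map_div, div_eq_mul_inv]
  exact hχ _ (h ▸ I.mul_mem_right _ hvw)

theorem MonoidHom.map_lift_mul (hχ : ∀ v : Rˣ, (v : R) - 1 ∈ I → χ v = 1)
    {u : R → Rˣ} (hu : ∀ x, IsUnit (Ideal.Quotient.mk I x) → x - (u x : R) ∈ I)
    {c x : R} (hc : IsUnit (Ideal.Quotient.mk I c)) (hx : IsUnit (Ideal.Quotient.mk I x)) :
    χ (u (c * x)) = χ (u c) * χ (u x) := by
  have hcx : IsUnit (Ideal.Quotient.mk I (c * x)) := by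
    rw [map_mul]; exact hc.mul hx
  rw [← map_mul]
  refine χ.map_eq_of_sub_mem hχ ?_
  have h : (u (c * x) : R) - (u c * u x : Rˣ) =
      -(c * x - u (c * x)) + x * (c - u c) + u c * (x - u x) := by
    rw [Units.val_mul]; ring
  rw [h]
  exact I.add_mem (I.add_mem (I.neg_mem (hu _ hcx)) (I.mul_mem_left _ (hu _ hc)))
    (I.mul_mem_left _ (hu _ hx))

end UnitsModIdeal

section ExtendByZero

variable {R M : Type*} [CommRing R] [CommMonoidWithZero M] (I : Ideal R) (χ : Rˣ →* Mˣ)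
  (u : R → Rˣ)

noncomputable def unitsCharExtend (c : R) : M :=
  if IsUnit (Ideal.Quotient.mk I c) then (χ (u c) : M) else 0

variable {I χ u}

theorem unitsCharExtend_mul (hχ : ∀ v : Rˣ, (v : R) - 1 ∈ I → χ v = 1)
    (hu : ∀ x, IsUnit (Ideal.Quotient.mk I x) → x - (u x : R) ∈ I) (c x : R) :
    unitsCharExtend I χ u (c * x) = unitsCharExtend I χ u c * unitsCharExtend I χ u x := by
  unfold unitsCharExtend
  by_cases hc : IsUnit (Ideal.Quotient.mk I c) <;> by_cases hx : IsUnit (Ideal.Quotient.mk I x)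
  · rw [if_pos (by rw [map_mul]; exact hc.mul hx), if_pos hc, if_pos hx,
      χ.map_lift_mul hχ hu hc hx, Units.val_mul]
  · rw [if_neg fun h => hx (isUnit_of_mul_isUnit_right (by rwa [map_mul] at h)), if_neg hx,
      mul_zero]
  all_goals
    rw [if_neg fun h => hc (isUnit_of_mul_isUnit_left (by rwa [map_mul] at h)), if_neg hc,
      zero_mul]

theorem unitsCharExtend_ne_zero [Nontrivial M] : unitsCharExtend I χ u ≠ 0 := fun h => by
  have h1 := congr_fun h 1
  rw [unitsCharExtend, if_pos (by simp)] at h1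
  exact (χ (u 1)).ne_zero h1

end ExtendByZero

theorem stmt1_general (R : Type) [CommRing R] [Fintype R]
    (β : R → ℝ)
    (a : R) (χ : Rˣ →* ℂˣ)
    (hχ : ∀ v : Rˣ, ((v : R) - 1) ∈ annId a → χ v = 1)
    (u : R → Rˣ)
    (hu : ∀ x : R, IsUnit (Ideal.Quotient.mk (annId a) x) → x - (u x : R) ∈ annId a) :
    (((Bmat R β).map (fun t : ℝ => (t : ℂ))).charpoly).IsRoot
      (∑ x ∈ Finset.univ.filter
          (fun x => IsUnit (Ideal.Quotient.mk (annId a) x)),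
        (β x : ℂ) * (χ (u x) : ℂ)) := by
  have heigen := Bmat_map_mulVec_of_map_mul β (unitsCharExtend_mul hχ hu)
  simp only [unitsCharExtend, mul_ite, mul_zero, ← Finset.sum_filter] at heigen
  exact Matrix.isRoot_charpoly_of_mulVec_eq_smul unitsCharExtend_ne_zero heigen

/-- For every `χ ∈ Σ_a` and compatible choice of units `u`, the number
`λ_χ = ∑_{x ∈ F_a} β(x)·χ(u(x))` is an eigenvalue of `B_R`. -/
theorem stmt1 (R : Type) [CommRing R] [Fintype R]
    (β : R → ℝ) (hβ : ∀ x, 0 ≤ β x) (hβsum : ∑ x, β x = 1)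
    (a : R) (χ : Rˣ →* ℂˣ)
    (hχ : ∀ v : Rˣ, ((v : R) - 1) ∈ annId a → χ v = 1)
    (u : R → Rˣ)
    (hu : ∀ x : R, IsUnit (Ideal.Quotient.mk (annId a) x) → x - (u x : R) ∈ annId a) :
    (((Bmat R β).map (fun t : ℝ => (t : ℂ))).charpoly).IsRoot
      (∑ x ∈ Finset.univ.filter
          (fun x => IsUnit (Ideal.Quotient.mk (annId a) x)),
        (β x : ℂ) * (χ (u x) : ℂ)) :=
  stmt1_general R β a χ hχ u hu
end

section
/- For all a, x ∈ R the following are equivalent: (1) x·S_a ⊆ S_a, i.e. for every y ∈ R with yR = aR one also has (x·y)R = aR; (2) the image f_a(x) of x in Q_a = R/ann(a) is a unit of Q_a (equivalently, x ∈ F_a). -/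
/-!
Both conditions say that `x·a` divides `a`. For the unit condition this is immediate:
`x·c ≡ 1 mod ann(a)` means `x·c·a = a`. For the generator condition, taking `y = a` gives
`x·a ∣ a`; conversely, if `x·a ∣ a` and `y` generates `aR`, then `x·y ∣ x·a ∣ a ∣ x·y`.
-/

section

variable {R : Type} [CommRing R]

lemma mem_annId {a z : R} : z ∈ annId a ↔ z * a = 0 :=
  Iff.rfl

lemma mk_annId_eq_one_iff {a z : R} : Ideal.Quotient.mk (annId a) z = 1 ↔ z * a = a := by
  rw [← map_one (Ideal.Quotient.mk (annId a)), Ideal.Quotient.mk_eq_mk_iff_sub_mem, mem_annId,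
    sub_mul, one_mul, sub_eq_zero]

lemma isUnit_mk_annId_iff {a x : R} : IsUnit (Ideal.Quotient.mk (annId a) x) ↔ x * a ∣ a := by
  simp only [isUnit_iff_exists_inv, Ideal.Quotient.mk_surjective.exists, ← map_mul,
    mk_annId_eq_one_iff]
  exact exists_congr fun c ↦ by rw [eq_comm, mul_right_comm]

lemma span_singleton_eq_span_singleton_iff_dvd {a b : R} :
    Ideal.span {a} = Ideal.span {b} ↔ a ∣ b ∧ b ∣ a := by
  rw [le_antisymm_iff, Ideal.span_singleton_le_span_singleton,
    Ideal.span_singleton_le_span_singleton, and_comm]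

end

theorem stmt3_general (R : Type) [CommRing R] (a x : R) :
    (∀ y : R, Ideal.span ({y} : Set R) = Ideal.span {a} →
        Ideal.span ({x * y} : Set R) = Ideal.span {a}) ↔
      IsUnit (Ideal.Quotient.mk (annId a) x) := by
  simp only [isUnit_mk_annId_iff, span_singleton_eq_span_singleton_iff_dvd]
  constructor
  · intro h
    exact (h a ⟨dvd_rfl, dvd_rfl⟩).1
  · rintro hxa y ⟨hya, hay⟩
    exact ⟨(mul_dvd_mul_left x hya).trans hxa, hay.mul_left x⟩

/-- `x·S_a ⊆ S_a` if and only if the image of `x` in `R/ann(a)` is a unit. -/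
theorem stmt3 (R : Type) [CommRing R] [Fintype R] (a x : R) :
    (∀ y : R, Ideal.span ({y} : Set R) = Ideal.span {a} →
        Ideal.span ({x * y} : Set R) = Ideal.span {a}) ↔
      IsUnit (Ideal.Quotient.mk (annId a) x) :=
  stmt3_general R a x
end

section
/- For every a ∈ R, the set S_a of generators of the principal ideal (a) has the same cardinality as the unit group of the quotient ring Q_a = R/ann(a); that is, |{y ∈ R : yR = aR}| = |(R/ann(a))ˣ| (the bijection being induced by sending a generator x·a to f_a(x)). -/
/-!
Multiplication by `a` descends to an injective map `f_a(x) ↦ x·a` from `R/ann(a)` onto `(a)`.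
Since `x·a` and `a` generate the same ideal exactly when `z·x·a = a` for some `z`, i.e. when
`f_a(z)·f_a(x) = 1`, this map sends the units of `R/ann(a)` bijectively onto the generators of `(a)`.
-/

namespace annId

variable {R : Type} [CommRing R] {a : R}

theorem mem_iff {x : R} : x ∈ annId a ↔ x * a = 0 := Iff.rfl

theorem mk_eq_mk_iff {x y : R} :
    Ideal.Quotient.mk (annId a) x = Ideal.Quotient.mk (annId a) y ↔ x * a = y * a := by
  rw [Ideal.Quotient.mk_eq_mk_iff_sub_mem, mem_iff, sub_mul, sub_eq_zero]

variable (a) in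
def liftMul : R ⧸ annId a →ₗ[R] R :=
  (annId a).liftQ (LinearMap.toSpanSingleton R R a) fun _ hx => mem_iff.1 hx

@[simp]
theorem liftMul_mk (x : R) : liftMul a (Ideal.Quotient.mk (annId a) x) = x * a := rfl

theorem liftMul_injective : Function.Injective (liftMul a) := by
  intro p q hpq
  obtain ⟨x, rfl⟩ := Ideal.Quotient.mk_surjective p
  obtain ⟨y, rfl⟩ := Ideal.Quotient.mk_surjective q
  exact mk_eq_mk_iff.2 hpq

theorem isUnit_mk_iff_span_mul_eq {x : R} :
    IsUnit (Ideal.Quotient.mk (annId a) x) ↔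
      Ideal.span {x * a} = Ideal.span {a} := by
  have span_mul_le : Ideal.span {x * a} ≤ Ideal.span {a} :=
    Ideal.span_singleton_le_span_singleton.2 (dvd_mul_left a x)
  rw [isUnit_iff_exists_inv', Ideal.Quotient.mk_surjective.exists, span_mul_le.ge_iff_eq.symm,
    Ideal.span_singleton_le_span_singleton, dvd_iff_exists_eq_mul_left]
  refine exists_congr fun z => ?_
  rw [← map_mul, ← map_one (Ideal.Quotient.mk (annId a)), mk_eq_mk_iff]
  constructor <;> intro h <;> linear_combination -h

end annId

theorem stmt4_general (R : Type) [CommRing R] (a : R) :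
    Nat.card {y : R // Ideal.span ({y} : Set R) = Ideal.span {a}} =
      Nat.card (R ⧸ annId a)ˣ := by
  have generates (u : (R ⧸ annId a)ˣ) : Ideal.span {annId.liftMul a u} = Ideal.span {a} := by
    obtain ⟨x, hx⟩ := Ideal.Quotient.mk_surjective (u : R ⧸ annId a)
    rw [← hx, annId.liftMul_mk, ← annId.isUnit_mk_iff_span_mul_eq, hx]
    exact u.isUnit
  refine (Nat.card_eq_of_bijective (fun u => ⟨annId.liftMul a u, generates u⟩) ⟨?_, ?_⟩).symm
  · exact fun u v huv => Units.ext (annId.liftMul_injective (congrArg Subtype.val huv))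
  · rintro ⟨y, hy⟩
    obtain ⟨x, rfl⟩ := Ideal.mem_span_singleton'.1 (hy ▸ Ideal.mem_span_singleton_self y)
    exact ⟨(annId.isUnit_mk_iff_span_mul_eq.2 hy).unit, Subtype.ext (annId.liftMul_mk x)⟩

/-- The set `S_a` of generators of the principal ideal `(a)` is in bijection with
the unit group of `R/ann(a)`. -/
theorem stmt4 (R : Type) [CommRing R] [Fintype R] (a : R) :
    Nat.card {y : R // Ideal.span ({y} : Set R) = Ideal.span {a}} =
      Nat.card (R ⧸ annId a)ˣ :=
  stmt4_general R a
end

section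
/- Let a ∈ R and x ∈ F_a. Then there exists a unit u ∈ Rˣ such that x·z = u·z for every z ∈ S_a. Moreover, if u, u′ ∈ Rˣ both satisfy x·z = u·z and x·z = u′·z for every z ∈ S_a, then χ(u) = χ(u′) for every character χ ∈ Σ_a. -/
theorem exists_isIdempotentElem_pow {M : Type*} [Monoid M] [Finite M] (x : M) :
    ∃ n ≠ 0, IsIdempotentElem (x ^ n) := by
  obtain ⟨i, j, hij, hpow⟩ := Finite.exists_ne_map_eq_of_infinite (fun k : ℕ => x ^ k)
  wlog hlt : i < j generalizing i j
  · exact this j i hij.symm hpow.symm (by omega)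
  set d := j - i
  have hperiod : ∀ k, x ^ (i + k * d) = x ^ i := by
    intro k
    induction k with
    | zero => simp
    | succ k ih =>
      rw [show i + (k + 1) * d = i + k * d + d by ring, pow_add, ih, ← pow_add,
        show i + d = j by omega, hpow]
  have hd : 0 < d := by omega
  have hi : i ≤ (i + 1) * d := by nlinarith
  refine ⟨(i + 1) * d, by positivity, ?_⟩
  rw [IsIdempotentElem, ← pow_add,
    show (i + 1) * d + (i + 1) * d = ((i + 1) * d - i) + (i + (i + 1) * d) by omega,
    pow_add, hperiod, ← pow_add, Nat.sub_add_cancel hi]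

theorem units_map_surjective_of_finite {R S : Type*} [CommRing R] [Finite R] [CommRing S]
    {f : R →+* S} (hf : Function.Surjective f) : Function.Surjective (Units.map (f : R →* S)) := by
  intro v
  obtain ⟨x, hx⟩ := hf v
  obtain ⟨n, hn, he⟩ := exists_isIdempotentElem_pow x
  set e := x ^ n
  have hfe : f e = 1 :=
    (IsIdempotentElem.iff_eq_one_of_isUnit (by simp [e, hx, v.isUnit.pow])).mp (he.map f)
  have hxe : x * x ^ (n - 1) = e := by rw [← pow_succ', Nat.sub_add_cancel (by omega)]
  have hinv : (x * e + (1 - e)) * (x ^ (n - 1) * e + (1 - e)) = 1 := by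
    linear_combination (e * e) * hxe + (e + 2 - x - x ^ (n - 1)) * he.eq
  refine ⟨⟨_, _, hinv, by rw [mul_comm, hinv]⟩, Units.ext ?_⟩
  simp [hfe, hx]

theorem annId_le_annId_of_mem_span_singleton {R : Type} [CommRing R] {a z : R}
    (hz : z ∈ Ideal.span {a}) : annId a ≤ annId z := by
  obtain ⟨r, rfl⟩ := Ideal.mem_span_singleton'.mp hz
  intro y (hy : y * a = 0)
  show y * (r * a) = 0
  rw [mul_left_comm, hy, mul_zero]

theorem units_inv_mul_sub_one_mem_annId {R : Type} [CommRing R] {a : R} {u u' : Rˣ}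
    (h : (u : R) * a = u' * a) : ((u'⁻¹ * u : Rˣ) : R) - 1 ∈ annId a := by
  show (((u'⁻¹ * u : Rˣ) : R) - 1) * a = 0
  rw [sub_mul, Units.val_mul, mul_assoc, h, ← mul_assoc, ← Units.val_mul, inv_mul_cancel,
    Units.val_one, one_mul, sub_self]

/-- For `x ∈ F_a` there is a unit `u ∈ Rˣ` acting like `x` on `S_a`, and such a
unit is unique up to the value of any character `χ ∈ Σ_a`. -/
theorem stmt5 (R : Type) [CommRing R] [Fintype R] (a x : R)
    (hx : IsUnit (Ideal.Quotient.mk (annId a) x)) :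
    (∃ u : Rˣ, ∀ z : R, Ideal.span ({z} : Set R) = Ideal.span {a} →
        x * z = (u : R) * z) ∧
    (∀ u u' : Rˣ,
      (∀ z : R, Ideal.span ({z} : Set R) = Ideal.span {a} → x * z = (u : R) * z) →
      (∀ z : R, Ideal.span ({z} : Set R) = Ideal.span {a} → x * z = (u' : R) * z) →
      ∀ χ : Rˣ →* ℂˣ, (∀ v : Rˣ, ((v : R) - 1) ∈ annId a → χ v = 1) →
        χ u = χ u') := by
  constructor
  · obtain ⟨u, hu⟩ := units_map_surjective_of_finite Ideal.Quotient.mk_surjective hx.unit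
    have hxu : x - u ∈ annId a := by
      rw [← Ideal.Quotient.eq]
      exact (congrArg Units.val hu).symm
    refine ⟨u, fun z hz => ?_⟩
    have hmem : x - u ∈ annId z :=
      annId_le_annId_of_mem_span_singleton (hz ▸ Ideal.mem_span_singleton_self z) hxu
    exact sub_eq_zero.mp ((sub_mul _ _ _).symm.trans hmem)
  · intro u u' hu hu' χ hχ
    have hua : (u : R) * a = u' * a := (hu a rfl).symm.trans (hu' a rfl)
    rw [← mul_inv_cancel_left u' u, map_mul, hχ _ (units_inv_mul_sub_one_mem_annId hua), mul_one]
end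

section
/- Suppose β(x) = 1/|R| for all x ∈ R. Then the multiplicity of 0 as a root of the characteristic polynomial of B_R equals |R| minus the number of distinct principal ideals of R; equivalently, the number of nonzero eigenvalues of B_R counted with algebraic multiplicity equals the number of distinct principal ideals of R. -/
/-!
With `β` uniform, `B_R(a, b) = [b ∈ aR] / |aR|`, so `B_R = P * A` where `P : R × 𝒫 → ℂ` sends
`a` to its principal ideal `aR` and `A : 𝒫 × R → ℂ` sends a principal ideal to the uniform
distribution on it (`𝒫` the set of principal ideals). Sylvester's identity
`X ^ |𝒫| * χ(P * A) = X ^ |R| * χ(A * P)` reduces the claim to `det (A * P) ≠ 0`, and `A * P` is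
triangular for any linear extension of inclusion of ideals: `(A * P)(I, J)` counts the
generators of `J` inside `I`, which is nonzero on the diagonal and zero unless `J ≤ I`.
-/

open Finset Polynomial

open scoped Classical

namespace Matrix

theorem rootMultiplicity_zero_charpoly_mul_add_card {K m n : Type*} [CommRing K] [Nontrivial K]
    [Fintype m] [Fintype n] [DecidableEq m] [DecidableEq n]
    (A : Matrix m n K) (B : Matrix n m K) (hBA : (B * A).det ≠ 0) :
    (A * B).charpoly.rootMultiplicity 0 + Fintype.card n = Fintype.card m := by
  have hBA_root : ¬ (B * A).charpoly.IsRoot 0 := by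
    rw [IsRoot, ← coeff_zero_eq_eval_zero]
    exact fun h => hBA (by rw [det_eq_sign_charpoly_coeff, h, mul_zero])
  have key := congrArg (rootMultiplicity 0) (charpoly_mul_comm' A B)
  rw [mul_comm, mul_comm (X ^ _), show (X : K[X]) = X - C 0 by simp,
    rootMultiplicity_mul_X_sub_C_pow (charpoly_monic _).ne_zero,
    rootMultiplicity_mul_X_sub_C_pow (charpoly_monic _).ne_zero,
    rootMultiplicity_eq_zero hBA_root, zero_add] at key
  exact key

theorem det_ne_zero_of_apply_ne_zero_le {K ι α : Type*} [CommRing K] [IsDomain K]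
    [Fintype ι] [DecidableEq ι] [PartialOrder α] (M : Matrix ι ι K) {f : ι → α}
    (hf : Function.Injective f) (hle : ∀ i j, M i j ≠ 0 → f j ≤ f i) (hdiag : ∀ i, M i i ≠ 0) :
    M.det ≠ 0 := by
  let _ : LinearOrder ι := LinearOrder.lift' (toLinearExtension ∘ f) hf
  have hlower : M.IsLowerTriangular := fun i j hij => by
    by_contra h
    exact (toLinearExtension.monotone (hle i j h)).not_gt hij
  convert prod_ne_zero_iff.mpr fun i _ => hdiag i
  convert det_of_isLowerTriangular M hlower

end Matrix

section FiniteRing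

variable {R : Type*} [CommRing R] [Fintype R]

theorem card_filter_mul_eq_mul_card_span {a b : R} (hb : b ∈ Ideal.span {a}) :
    #{x | a * x = b} * Nat.card (Ideal.span {a}) = Fintype.card R := by
  have hrange {c : R} (hc : c ∈ Ideal.span {a}) : c ∈ Set.range (AddMonoidHom.mulLeft a) :=
    (Ideal.mem_span_singleton.mp hc).imp fun _ h => h.symm
  have hfiber : ∀ c ∈ Ideal.span {a}, #{x | a * x = c} = #{x | a * x = b} := fun c hc =>
    AddMonoidHom.card_fiber_eq_of_mem_range _ (hrange hc) (hrange hb)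
  have hmaps : ∀ x ∈ (univ : Finset R), a * x ∈ ({y | y ∈ Ideal.span {a}} : Finset R) :=
    fun x _ => by simpa using Ideal.mul_mem_right x _ (Ideal.mem_span_singleton_self a)
  rw [← card_univ, card_eq_sum_card_fiberwise hmaps,
    sum_congr rfl fun c hc => hfiber c (by simpa using hc), sum_const, smul_eq_mul, mul_comm,
    Nat.card_eq_fintype_card, Fintype.card_subtype]

theorem filter_mul_eq_eq_empty {a b : R} (hb : b ∉ Ideal.span {a}) :
    ({x | a * x = b} : Finset R) = ∅ :=
  filter_eq_empty_iff.mpr fun x _ hx =>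
    hb (hx ▸ Ideal.mul_mem_right x _ (Ideal.mem_span_singleton_self a))

abbrev PrincipalIdeal (R : Type*) [CommRing R] := {I : Ideal R // ∃ a : R, I = Ideal.span {a}}

noncomputable instance : Fintype (PrincipalIdeal R) := Fintype.ofFinite _

variable (R) (K : Type*) [Field K]

noncomputable def spanMatrix : Matrix R (PrincipalIdeal R) K :=
  fun a I => if Ideal.span {a} = I.1 then 1 else 0

noncomputable def uniformOnIdealMatrix : Matrix (PrincipalIdeal R) R K :=
  fun I b => if b ∈ I.1 then (Nat.card I.1 : K)⁻¹ else 0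

variable {R K}

theorem spanMatrix_mul_apply (M : Matrix (PrincipalIdeal R) R K) (a b : R) :
    (spanMatrix R K * M) a b = M ⟨Ideal.span {a}, a, rfl⟩ b := by
  rw [Matrix.mul_apply, Fintype.sum_eq_single ⟨Ideal.span {a}, a, rfl⟩]
  · simp [spanMatrix]
  · intro I hI
    simp only [spanMatrix, ite_mul, one_mul, zero_mul]
    exact if_neg fun h => hI (Subtype.ext h.symm)

theorem uniformOnIdealMatrix_mul_spanMatrix_apply (I J : PrincipalIdeal R) :
    (uniformOnIdealMatrix R K * spanMatrix R K) I J =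
      (Nat.card I.1 : K)⁻¹ * #{b | b ∈ I.1 ∧ Ideal.span {b} = J.1} := by
  simp only [Matrix.mul_apply, uniformOnIdealMatrix, spanMatrix, mul_ite, mul_one, mul_zero]
  rw [← sum_filter, ← sum_filter, filter_filter, sum_const, nsmul_eq_mul, mul_comm]
  simp only [and_comm]

theorem le_of_uniformOnIdealMatrix_mul_spanMatrix_ne_zero {I J : PrincipalIdeal R}
    (h : (uniformOnIdealMatrix R K * spanMatrix R K) I J ≠ 0) : J ≤ I := by
  rw [uniformOnIdealMatrix_mul_spanMatrix_apply] at h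
  obtain ⟨b, hb⟩ : ({b | b ∈ I.1 ∧ Ideal.span {b} = J.1} : Finset R).Nonempty :=
    nonempty_iff_ne_empty.mpr fun he => h (by rw [he, card_empty, Nat.cast_zero, mul_zero])
  obtain ⟨hbI, hbJ⟩ := (mem_filter.mp hb).2
  exact Subtype.coe_le_coe.mp (hbJ ▸ (Ideal.span_singleton_le_iff_mem _).mpr hbI)

variable [CharZero K]

theorem uniformOnIdealMatrix_mul_spanMatrix_apply_self_ne_zero (I : PrincipalIdeal R) :
    (uniformOnIdealMatrix R K * spanMatrix R K) I I ≠ 0 := by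
  obtain ⟨a, ha⟩ := I.2
  have hgen : a ∈ ({b | b ∈ I.1 ∧ Ideal.span {b} = I.1} : Finset R) :=
    mem_filter.mpr ⟨mem_univ a, ha ▸ Ideal.mem_span_singleton_self a, ha.symm⟩
  rw [uniformOnIdealMatrix_mul_spanMatrix_apply]
  exact mul_ne_zero (inv_ne_zero (Nat.cast_ne_zero.mpr Nat.card_pos.ne'))
    (Nat.cast_ne_zero.mpr (card_ne_zero_of_mem hgen))

theorem det_uniformOnIdealMatrix_mul_spanMatrix_ne_zero :
    (uniformOnIdealMatrix R K * spanMatrix R K).det ≠ 0 :=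
  Matrix.det_ne_zero_of_apply_ne_zero_le _ Subtype.val_injective
    (fun _ _ => le_of_uniformOnIdealMatrix_mul_spanMatrix_ne_zero)
    uniformOnIdealMatrix_mul_spanMatrix_apply_self_ne_zero

end FiniteRing

theorem Bmat_uniform_map_eq {R : Type} [CommRing R] [Fintype R] (K : Type*) [Field K]
    [Algebra ℝ K] (β : R → ℝ) (hβ : ∀ x, β x = 1 / (Fintype.card R : ℝ)) :
    (Bmat R β).map (algebraMap ℝ K) = spanMatrix R K * uniformOnIdealMatrix R K := by
  have : CharZero K := charZero_of_injective_algebraMap (algebraMap ℝ K).injective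
  ext a b
  simp only [Matrix.map_apply, Bmat, hβ, sum_const, nsmul_eq_mul, map_mul, map_div₀, map_one,
    map_natCast, spanMatrix_mul_apply, uniformOnIdealMatrix]
  split_ifs with hb
  · have hcount : (#{x | a * x = b} : K) * Nat.card (Ideal.span {a}) = Fintype.card R := by
      exact_mod_cast card_filter_mul_eq_mul_card_span hb
    have hspan : (Nat.card (Ideal.span {a}) : K) ≠ 0 := Nat.cast_ne_zero.mpr Nat.card_pos.ne'
    field_simp
    linear_combination hcount
  · simp [filter_mul_eq_eq_empty hb]

/-- With uniform multiplication probabilities, the multiplicity of `0` as a root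
of the characteristic polynomial of `B_R` equals `|R|` minus the number of
distinct principal ideals of `R`. -/
theorem stmt8 (R : Type) [CommRing R] [Fintype R]
    (β : R → ℝ) (hβ : ∀ x, β x = 1 / (Fintype.card R : ℝ)) :
    (((Bmat R β).map (fun t : ℝ => (t : ℂ))).charpoly).rootMultiplicity 0 =
      Fintype.card R -
        Nat.card {I : Ideal R // ∃ a : R, I = Ideal.span {a}} := by
  have key := Matrix.rootMultiplicity_zero_charpoly_mul_add_card _ _
    (det_uniformOnIdealMatrix_mul_spanMatrix_ne_zero (R := R) (K := ℂ))
  rw [← Bmat_uniform_map_eq ℂ β hβ] at key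
  rw [Nat.card_eq_fintype_card]
  exact Nat.eq_sub_of_add_eq key
end

section
/- Let m = p_1^{e_1}·p_2^{e_2}···p_r^{e_r} where p_1 < p_2 < ... < p_r are distinct primes and each e_i ≥ 1, let R = ℤ/mℤ, and suppose β(x) = 1/m for all x ∈ R. Then a complex number λ is a nonzero root of the characteristic polynomial of B_R if and only if there exists a subset T ⊆ {1,…,r} such that λ = ∏_{i∈T}(1 − 1/p_i), where the empty product (T = ∅) is 1. -/
open Finset Polynomial

open scoped Classical

/-!
For uniform `β`, `B(a, b) = [b ∈ a ℤ/m] / ord a`, where `ord` is the additive order, and in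
the cyclic group `ℤ/m` one has `b ∈ a ℤ/m ↔ ord b ∣ ord a`. Hence `B = C D` with
`C(a, k) = [ord a = k]` and `D(k, b) = [ord b ∣ k] / k`, indexed by the divisors `k` of `m`.
The products `C D` and `D C` have the same nonzero eigenvalues, and `D C (k, l) = [l ∣ k] φ(l) / k`
is triangular with diagonal `φ(k) / k = ∏_{q ∣ k prime} (1 - 1/q)`. As `k` runs over the
divisors of `m`, its set of prime factors runs over all subsets of `{p₁, …, p_r}`.
-/

theorem IsAddCyclic.mem_zmultiples_iff_addOrderOf_dvd {G : Type*} [AddGroup G] [Finite G]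
    [IsAddCyclic G] {x y : G} :
    y ∈ AddSubgroup.zmultiples x ↔ addOrderOf y ∣ addOrderOf x := by
  refine ⟨addOrderOf_dvd_of_mem_zmultiples, fun hyx => ?_⟩
  have := Fintype.ofFinite G
  set n := addOrderOf x
  -- a cyclic group has at most `n` solutions of `n • z = 0`, and `zmultiples x` supplies `n`
  have hsub : (AddSubgroup.zmultiples x : Set G).toFinset ⊆ ({z | n • z = 0} : Finset G) := by
    intro z hz
    rw [Set.mem_toFinset, SetLike.mem_coe] at hz
    simpa using addOrderOf_dvd_iff_nsmul_eq_zero.mp (addOrderOf_dvd_of_mem_zmultiples hz)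
  have heq := Finset.eq_of_subset_of_card_le hsub <| by
    rw [← Nat.card_eq_card_toFinset, SetLike.coe_sort_coe, Nat.card_zmultiples]
    exact IsAddCyclic.card_nsmul_eq_zero_le (addOrderOf_pos x)
  have hy : y ∈ ({z | n • z = 0} : Finset G) := by
    simpa using addOrderOf_dvd_iff_nsmul_eq_zero.mp hyx
  rw [← heq] at hy
  simpa using hy

theorem Matrix.isRoot_charpoly_mul_comm {R m n : Type*} [CommRing R] [IsDomain R]
    [Fintype m] [DecidableEq m] [Fintype n] [DecidableEq n]
    (A : Matrix m n R) (B : Matrix n m R) {μ : R} (hμ : μ ≠ 0) :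
    (A * B).charpoly.IsRoot μ ↔ (B * A).charpoly.IsRoot μ := by
  have h := congrArg (eval μ) (Matrix.charpoly_mul_comm' A B)
  simp only [eval_mul, eval_pow, eval_X] at h
  rw [IsRoot.def, IsRoot.def, ← mul_eq_zero_iff_left (pow_ne_zero (Fintype.card n) hμ), h,
    mul_eq_zero_iff_left (pow_ne_zero _ hμ)]

theorem Nat.totient_div_self_eq_prod_primeFactors {K : Type*} [Field K] [CharZero K] {n : ℕ}
    (hn : n ≠ 0) : (n.totient / n : K) = ∏ q ∈ n.primeFactors, (1 - 1 / (q : K)) := by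
  have h := congrArg (Rat.cast : ℚ → K) (Nat.totient_eq_mul_prod_factors n)
  push_cast at h
  rw [h, mul_div_cancel_left₀ _ (Nat.cast_ne_zero.mpr hn)]
  simp only [one_div]

theorem Nat.primeFactors_prod_pow {ι : Type*} (s : Finset ι) (p e : ι → ℕ)
    (hp : ∀ i ∈ s, (p i).Prime) (he : ∀ i ∈ s, e i ≠ 0) :
    (∏ i ∈ s, p i ^ e i).primeFactors = s.image p := by
  ext q
  have hprod : ∏ i ∈ s, p i ^ e i ≠ 0 :=
    prod_ne_zero_iff.mpr fun i hi => pow_ne_zero _ (hp i hi).ne_zero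
  rw [Nat.mem_primeFactors_of_ne_zero hprod, mem_image]
  constructor
  · rintro ⟨hq, hdvd⟩
    obtain ⟨i, hi, hqi⟩ := (Nat.Prime.prime hq).dvd_finsetProd_iff _ |>.mp hdvd
    exact ⟨i, hi, ((Nat.prime_dvd_prime_iff_eq hq (hp i hi)).mp (hq.dvd_of_dvd_pow hqi)).symm⟩
  · rintro ⟨i, hi, rfl⟩
    exact ⟨hp i hi, (dvd_pow_self _ (he i hi)).trans (dvd_prod_of_mem _ hi)⟩

theorem Nat.image_primeFactors_divisors {m : ℕ} (hm : m ≠ 0) :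
    m.divisors.image Nat.primeFactors = m.primeFactors.powerset := by
  ext S
  rw [mem_image, mem_powerset]
  constructor
  · rintro ⟨k, hk, rfl⟩
    exact Nat.primeFactors_mono (Nat.dvd_of_mem_divisors hk) hm
  · intro hS
    have hk : (∏ q ∈ S, q).primeFactors = S :=
      Nat.primeFactors_prod fun q hq => Nat.prime_of_mem_primeFactors (hS hq)
    have hdvd := (Nat.prod_primeFactors_dvd_iff (n := ∏ q ∈ S, q) hm).mpr
    rw [hk] at hdvd
    exact ⟨∏ q ∈ S, q, Nat.mem_divisors.mpr ⟨hdvd hS, hm⟩, hk⟩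

theorem bmat_const_apply {R : Type} [CommRing R] [Fintype R] (c : ℝ) (a b : R) :
    Bmat R (fun _ => c) a b = Nat.card {x // a * x = b} * c := by
  rw [Bmat, sum_const, nsmul_eq_mul, Nat.card_eq_fintype_card, Fintype.card_subtype]

namespace ZMod

noncomputable def addOrderMatrix (m : ℕ) : Matrix (ZMod m) m.divisors ℂ :=
  fun a k => if addOrderOf a = k then 1 else 0

noncomputable def subgroupAvgMatrix (m : ℕ) : Matrix m.divisors (ZMod m) ℂ :=
  fun k b => if addOrderOf b ∣ k then (k : ℂ)⁻¹ else 0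

variable {m : ℕ} [NeZero m]

theorem addOrderOf_mem_divisors (a : ZMod m) : addOrderOf a ∈ m.divisors :=
  Nat.mem_divisors.mpr ⟨by simpa using addOrderOf_dvd_card (x := a), NeZero.ne m⟩

theorem mem_range_mul_left_iff (a b : ZMod m) :
    b ∈ Set.range (a * ·) ↔ addOrderOf b ∣ addOrderOf a := by
  rw [← IsAddCyclic.mem_zmultiples_iff_addOrderOf_dvd, AddSubgroup.mem_zmultiples_iff]
  constructor
  · rintro ⟨x, rfl⟩
    exact ⟨x.val, by rw [natCast_zsmul, nsmul_eq_mul, natCast_zmod_val, mul_comm]⟩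
  · rintro ⟨k, rfl⟩
    exact ⟨k, by rw [zsmul_eq_mul, mul_comm]⟩

theorem natCard_mul_left_eq_mul_addOrderOf (a b : ZMod m) :
    Nat.card {x // a * x = b} * addOrderOf a = if addOrderOf b ∣ addOrderOf a then m else 0 := by
  split_ifs with hb
  · let f := AddMonoidHom.mulLeft a
    have hfiber : Nat.card {x // a * x = b} = Nat.card f.ker := by
      simp only [Nat.card_eq_fintype_card, Fintype.card_subtype, AddMonoidHom.mem_ker]
      exact AddMonoidHom.card_fiber_eq_of_mem_range f ((mem_range_mul_left_iff a b).mpr hb)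
        ⟨0, mul_zero a⟩
    have hrange : f.range = AddSubgroup.zmultiples a := by
      ext c
      rw [IsAddCyclic.mem_zmultiples_iff_addOrderOf_dvd, ← mem_range_mul_left_iff]
      rfl
    rw [hfiber, ← Nat.card_zmultiples, ← hrange, ← AddSubgroup.index_ker,
      AddSubgroup.card_mul_index, Nat.card_zmod]
  · have : IsEmpty {x // a * x = b} :=
      ⟨fun x => hb ((mem_range_mul_left_iff a b).mp ⟨x, x.2⟩)⟩
    rw [Nat.card_of_isEmpty, zero_mul]

theorem bmat_uniform_map_eq_mul :
    (Bmat (ZMod m) fun _ => 1 / (m : ℝ)).map (↑) = addOrderMatrix m * subgroupAvgMatrix m := by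
  ext a b
  have hm : (m : ℂ) ≠ 0 := Nat.cast_ne_zero.mpr (NeZero.ne m)
  have ha : (addOrderOf a : ℂ) ≠ 0 := Nat.cast_ne_zero.mpr (addOrderOf_pos a).ne'
  have hcard := congrArg (Nat.cast (R := ℂ)) (natCard_mul_left_eq_mul_addOrderOf a b)
  rw [Matrix.mul_apply, sum_eq_single_of_mem ⟨_, addOrderOf_mem_divisors a⟩ (mem_univ _)
    fun k _ hk => by rw [addOrderMatrix, if_neg fun h => hk (Subtype.ext h.symm), zero_mul]]
  simp only [Matrix.map_apply, bmat_const_apply, addOrderMatrix, subgroupAvgMatrix, if_pos, one_mul]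
  push_cast at hcard ⊢
  split_ifs at hcard ⊢
  · field_simp
    linear_combination hcard
  · rw [mul_eq_zero_iff_right ha] at hcard
    rw [hcard, zero_mul]

theorem subgroupAvgMatrix_mul_addOrderMatrix_apply (k l : m.divisors) :
    (subgroupAvgMatrix m * addOrderMatrix m) k l =
      if (l : ℕ) ∣ k then (Nat.totient l / k : ℂ) else 0 := by
  have hl : (l : ℕ) ∣ Fintype.card (ZMod m) := by simpa using Nat.dvd_of_mem_divisors l.2
  have hterm : ∀ b : ZMod m, subgroupAvgMatrix m k b * addOrderMatrix m b l =
      if addOrderOf b = l then (if (l : ℕ) ∣ k then (k : ℂ)⁻¹ else 0) else 0 := by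
    intro b
    simp only [subgroupAvgMatrix, addOrderMatrix]
    split_ifs <;> simp_all
  rw [Matrix.mul_apply, sum_congr rfl fun b _ => hterm b, sum_ite, sum_const_zero, add_zero,
    sum_const, IsAddCyclic.card_addOrderOf_eq_totient hl, nsmul_eq_mul]
  split_ifs <;> simp [div_eq_mul_inv]

theorem isRoot_charpoly_subgroupAvgMatrix_mul_addOrderMatrix_iff (μ : ℂ) :
    (subgroupAvgMatrix m * addOrderMatrix m).charpoly.IsRoot μ ↔
      ∃ k ∈ m.divisors, μ = Nat.totient k / k := by
  have htri : (subgroupAvgMatrix m * addOrderMatrix m).transpose.IsUpperTriangular :=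
    fun k l hlk => by
      rw [Matrix.transpose_apply, subgroupAvgMatrix_mul_addOrderMatrix_apply, if_neg]
      exact fun hkl => (Nat.le_of_dvd (Nat.pos_of_mem_divisors l.2) hkl).not_gt hlk
  rw [← Matrix.charpoly_transpose, Matrix.charpoly_of_isUpperTriangular _ htri, isRoot_prod]
  simp only [IsRoot.def, eval_sub, eval_X, eval_C, sub_eq_zero, Matrix.transpose_apply,
    subgroupAvgMatrix_mul_addOrderMatrix_apply, dvd_refl, if_true, mem_univ, true_and]
  exact ⟨fun ⟨k, hk⟩ => ⟨k, k.2, hk⟩, fun ⟨k, hk, h⟩ => ⟨⟨k, hk⟩, h⟩⟩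

theorem isRoot_charpoly_bmat_uniform_iff (μ : ℂ) :
    μ ≠ 0 ∧ ((Bmat (ZMod m) fun _ => 1 / (m : ℝ)).map (↑)).charpoly.IsRoot μ ↔
      ∃ k ∈ m.divisors, μ = Nat.totient k / k := by
  rw [bmat_uniform_map_eq_mul, ← isRoot_charpoly_subgroupAvgMatrix_mul_addOrderMatrix_iff]
  refine ⟨fun ⟨hμ, h⟩ => (Matrix.isRoot_charpoly_mul_comm _ _ hμ).mp h, fun h => ?_⟩
  have hμ : μ ≠ 0 := by
    obtain ⟨k, hk, rfl⟩ := isRoot_charpoly_subgroupAvgMatrix_mul_addOrderMatrix_iff μ |>.mp h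
    have hk0 := Nat.pos_of_mem_divisors hk
    exact div_ne_zero (Nat.cast_ne_zero.mpr (Nat.totient_pos.mpr hk0).ne')
      (Nat.cast_ne_zero.mpr hk0.ne')
  exact ⟨hμ, (Matrix.isRoot_charpoly_mul_comm _ _ hμ).mpr h⟩

end ZMod

/-- For `R = ℤ/mℤ` with `m = p₁^{e₁}⋯p_r^{e_r}` and uniform multiplication
probabilities, the nonzero eigenvalues of `B_R` are exactly the products
`∏_{i∈T}(1 − 1/p_i)` over subsets `T ⊆ {1,…,r}`. -/
theorem stmt9 (r : ℕ) (p e : Fin r → ℕ) (hp : ∀ i, (p i).Prime)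
    (hmono : StrictMono p) (he : ∀ i, 1 ≤ e i)
    (m : ℕ) [NeZero m] (hm : m = ∏ i, p i ^ e i)
    (β : ZMod m → ℝ) (hβ : ∀ x, β x = 1 / (m : ℝ)) :
    ∀ lam : ℂ,
      (lam ≠ 0 ∧
        (((Bmat (ZMod m) β).map (fun t : ℝ => (t : ℂ))).charpoly).IsRoot lam) ↔
      ∃ T : Finset (Fin r), lam = ∏ i ∈ T, (1 - 1 / (p i : ℂ)) := by
  intro lam
  obtain rfl : β = fun _ => 1 / (m : ℝ) := funext hβ
  have hpf : m.primeFactors = univ.image p := by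
    rw [hm, Nat.primeFactors_prod_pow _ _ _ (fun i _ => hp i)
      fun i _ => Nat.pos_iff_ne_zero.mp (he i)]
  rw [ZMod.isRoot_charpoly_bmat_uniform_iff, exists_congr fun k => and_congr_right fun hk => by
    rw [Nat.totient_div_self_eq_prod_primeFactors (Nat.pos_of_mem_divisors hk).ne'],
    ← exists_mem_image (p := fun S : Finset ℕ => lam = ∏ q ∈ S, (1 - 1 / (q : ℂ))),
    Nat.image_primeFactors_divisors (NeZero.ne m), hpf]
  simp only [mem_powerset, subset_image_iff, subset_univ, true_and, exists_exists_eq_and,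
    prod_image hmono.injective.injOn]
end

section
/- Let m = p_1^{e_1}·p_2^{e_2}···p_r^{e_r} where p_1 < p_2 < ... < p_r are distinct primes and each e_i ≥ 1, let R = ℤ/mℤ, and suppose β(x) = 1/m for all x ∈ R. Then for every subset T ⊆ {1,…,r}, the algebraic multiplicity of ∏_{i∈T}(1 − 1/p_i) as a root of the characteristic polynomial of B_R equals ∏_{i∈T} e_i (both products being 1 when T = ∅). -/
/-!
Up to the factor `1/m`, `B(a, c)` counts the solutions of `a * x = c`; there are `m / ord a` of
them when `c` lies in the cyclic subgroup generated by `a` and none otherwise. So `B(a, c)` is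
`1 / ord a` or `0`, and vanishes whenever `ord a < ord c`: ordered by decreasing additive order,
`B` is block triangular. In a cyclic group, elements of equal order generate the same subgroup,
so the block of the elements of order `d ∣ m` is the `φ(d) × φ(d)` matrix with all entries `1/d`,
whose characteristic polynomial is `X^(φ d - 1) (X - φ(d)/d)`. The nonzero eigenvalues of `B` are
thus the Euler products `φ(d)/d = ∏_{q ∣ d} (1 - 1/q)`, one for each divisor `d` of `m`. Such a
product determines the set of primes `q` (look at the largest prime where two sets differ), so
the multiplicity of `∏_{i ∈ T} (1 - 1/p_i)` is the number of divisors of `m` whose prime support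
is `{p_i | i ∈ T}`, namely `∏_{i ∈ T} e_i`.
-/

open Finset Polynomial

open scoped Classical

theorem IsAddCyclic.mem_zmultiples_of_addOrderOf_eq {G : Type*} [AddGroup G] [Fintype G]
    [IsAddCyclic G] {a c : G} (h : addOrderOf c = addOrderOf a) :
    c ∈ AddSubgroup.zmultiples a := by
  by_contra hc
  -- a cyclic group has at most `n` solutions of `n • x = 0`
  have hsub : insert c (univ.filter (· ∈ AddSubgroup.zmultiples a)) ⊆
      univ.filter (addOrderOf a • · = 0) := by
    intro x hx
    simp only [mem_insert, mem_filter, mem_univ, true_and] at hx ⊢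
    rcases hx with rfl | hx
    · rw [← h, addOrderOf_nsmul_eq_zero]
    · exact addOrderOf_dvd_iff_nsmul_eq_zero.mp (addOrderOf_dvd_of_mem_zmultiples hx)
  have hcard := (card_le_card hsub).trans (card_nsmul_eq_zero_le (addOrderOf_pos a))
  rw [card_insert_of_notMem (by simpa using hc), ← Fintype.card_subtype,
    Fintype.card_zmultiples] at hcard
  omega

namespace ZMod

variable {m : ℕ} [NeZero m]

theorem exists_mul_eq_iff_mem_zmultiples {a c : ZMod m} :
    (∃ x, a * x = c) ↔ c ∈ AddSubgroup.zmultiples a := by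
  rw [AddSubgroup.mem_zmultiples_iff]
  refine ⟨fun ⟨x, hx⟩ => ⟨x.val, ?_⟩, fun ⟨n, hn⟩ => ⟨n, ?_⟩⟩
  · rw [← hx, natCast_zsmul, nsmul_eq_mul, natCast_zmod_val, mul_comm]
  · rw [← hn, zsmul_eq_mul, mul_comm]

theorem card_mul_eq_zero_mul_addOrderOf (a : ZMod m) :
    #{x : ZMod m | a * x = 0} * addOrderOf a = m := by
  let f := AddMonoidHom.mulLeft a
  have hrange : f.range = AddSubgroup.zmultiples a := by
    ext c
    exact exists_mul_eq_iff_mem_zmultiples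
  have hker : #{x : ZMod m | a * x = 0} = Nat.card f.ker := by
    rw [← Fintype.card_subtype, ← Nat.card_eq_fintype_card]
    rfl
  rw [hker, ← Nat.card_zmultiples, ← hrange, ← AddSubgroup.index_ker, AddSubgroup.card_mul_index,
    Nat.card_zmod]

theorem card_mul_eq_mul_addOrderOf (a c : ZMod m) :
    #{x : ZMod m | a * x = c} * addOrderOf a =
      if c ∈ AddSubgroup.zmultiples a then m else 0 := by
  split_ifs with hc
  · obtain ⟨x, hx⟩ := exists_mul_eq_iff_mem_zmultiples.mpr hc
    have hfiber : #{y : ZMod m | a * y = c} = #{y : ZMod m | a * y = 0} :=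
      AddMonoidHom.card_fiber_eq_of_mem_range (AddMonoidHom.mulLeft a) ⟨x, hx⟩ ⟨0, mul_zero a⟩
    rw [hfiber, card_mul_eq_zero_mul_addOrderOf]
  · rw [filter_false_of_mem fun x _ hx => hc (exists_mul_eq_iff_mem_zmultiples.mp ⟨x, hx⟩),
      card_empty, zero_mul]

theorem card_addOrderOf_eq_totient {d : ℕ} (hd : d ∣ m) :
    #{a : ZMod m | addOrderOf a = d} = d.totient :=
  IsAddCyclic.card_addOrderOf_eq_totient ((ZMod.card m).symm ▸ hd)

theorem image_addOrderOf_univ : univ.image (addOrderOf : ZMod m → ℕ) = m.divisors := by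
  ext d
  simp only [mem_image, mem_univ, true_and, Nat.mem_divisors, NeZero.ne m, ne_eq,
    not_false_eq_true, and_true]
  refine ⟨fun ⟨a, ha⟩ => ha ▸ addOrderOf_dvd_card.trans (dvd_of_eq (ZMod.card m)), fun hd => ?_⟩
  have hpos : 0 < #{a : ZMod m | addOrderOf a = d} := by
    rw [card_addOrderOf_eq_totient hd, Nat.totient_pos]
    exact Nat.pos_of_dvd_of_pos hd (Nat.pos_of_ne_zero (NeZero.ne m))
  obtain ⟨a, ha⟩ := card_pos.mp hpos
  exact ⟨a, (mem_filter.mp ha).2⟩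

end ZMod

namespace Polynomial

theorem rootMultiplicity_X_pow_sub_smul_X_pow {K : Type*} [Field K] {n : ℕ} (hn : n ≠ 0)
    (c : K) {x : K} (hx : x ≠ 0) :
    (X ^ n - c • X ^ (n - 1) : K[X]).rootMultiplicity x = if x = c then 1 else 0 := by
  obtain ⟨k, rfl⟩ := Nat.exists_eq_succ_of_ne_zero hn
  have hfactor : (X ^ (k + 1) - c • X ^ (k + 1 - 1) : K[X]) = X ^ k * (X - C c) := by
    rw [Nat.add_sub_cancel, smul_eq_C_mul]
    ring
  rw [hfactor, rootMultiplicity_mul (mul_ne_zero (pow_ne_zero _ X_ne_zero) (X_sub_C_ne_zero c)),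
    rootMultiplicity_eq_zero (by simp [hx]), rootMultiplicity_X_sub_C, zero_add]

theorem rootMultiplicity_prod {ι R : Type*} [CommRing R] [IsDomain R] (s : Finset ι)
    (f : ι → R[X]) (h : ∏ i ∈ s, f i ≠ 0) (x : R) :
    (∏ i ∈ s, f i).rootMultiplicity x = ∑ i ∈ s, (f i).rootMultiplicity x := by
  simp only [← count_roots, roots_prod f s h, Multiset.count_bind]
  rfl

end Polynomial

noncomputable def uniformMulMatrix (m : ℕ) [NeZero m] : Matrix (ZMod m) (ZMod m) ℂ :=
  (Bmat (ZMod m) fun _ => 1 / (m : ℝ)).map (fun t : ℝ => (t : ℂ))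

section UniformMulMatrix

variable {m : ℕ} [NeZero m]

theorem uniformMulMatrix_apply (a c : ZMod m) :
    uniformMulMatrix m a c =
      if c ∈ AddSubgroup.zmultiples a then ((addOrderOf a : ℕ) : ℂ)⁻¹ else 0 := by
  have hcard := congrArg (Nat.cast : ℕ → ℂ) (ZMod.card_mul_eq_mul_addOrderOf a c)
  push_cast at hcard
  have hm : (m : ℂ) ≠ 0 := Nat.cast_ne_zero.mpr (NeZero.ne m)
  have ha : ((addOrderOf a : ℕ) : ℂ) ≠ 0 := Nat.cast_ne_zero.mpr (addOrderOf_pos a).ne'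
  have hentry : uniformMulMatrix m a c = #{x : ZMod m | a * x = c} / (m : ℂ) := by
    simp only [uniformMulMatrix, Bmat, Matrix.map_apply, sum_const, nsmul_eq_mul]
    push_cast
    rw [mul_one_div]
    -- `Bmat` filters with the classical decidability instance
    congr!
  rw [hentry]
  split_ifs at hcard ⊢
  · rw [div_eq_iff hm, ← hcard]
    field_simp
  · rw [(mul_eq_zero.mp hcard).resolve_right ha, zero_div]

theorem blockTriangular_uniformMulMatrix :
    (uniformMulMatrix m).BlockTriangular (OrderDual.toDual ∘ addOrderOf) := by
  intro a c hlt
  rw [uniformMulMatrix_apply, if_neg]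
  intro hc
  exact (Nat.le_of_dvd (addOrderOf_pos a) (addOrderOf_dvd_of_mem_zmultiples hc)).not_gt hlt

theorem toSquareBlock_uniformMulMatrix (d : ℕᵒᵈ) :
    (uniformMulMatrix m).toSquareBlock (OrderDual.toDual ∘ addOrderOf) d =
      Matrix.vecMulVec (fun _ => ((OrderDual.ofDual d : ℕ) : ℂ)⁻¹) (fun _ => 1) := by
  ext ⟨a, ha⟩ ⟨c, hc⟩
  simp only [Function.comp_apply] at ha hc
  subst ha
  rw [Matrix.toSquareBlock_def, Matrix.of_apply, uniformMulMatrix_apply, Matrix.vecMulVec_apply,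
    mul_one, OrderDual.ofDual_toDual,
    if_pos (IsAddCyclic.mem_zmultiples_of_addOrderOf_eq (OrderDual.toDual.injective hc))]

open Nat in
theorem charpoly_uniformMulMatrix : (uniformMulMatrix m).charpoly =
    ∏ d ∈ m.divisors, (X ^ φ d - ((φ d : ℂ) / d) • X ^ (φ d - 1)) := by
  rw [blockTriangular_uniformMulMatrix.charpoly, ← image_image,
    prod_image fun _ _ _ _ h => OrderDual.toDual.injective h, ZMod.image_addOrderOf_univ]
  refine prod_congr rfl fun d hd => ?_
  have hcard : Fintype.card {a : ZMod m // (OrderDual.toDual ∘ addOrderOf) a = OrderDual.toDual d}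
      = φ d := by
    rw [Fintype.card_subtype, ← ZMod.card_addOrderOf_eq_totient (Nat.dvd_of_mem_divisors hd)]
    rfl
  rw [toSquareBlock_uniformMulMatrix, Matrix.charpoly_vecMulVec, hcard]
  simp only [dotProduct, mul_one, sum_const, nsmul_eq_mul, div_eq_mul_inv, OrderDual.ofDual_toDual]
  rw [Finset.card_univ, hcard]

theorem rootMultiplicity_charpoly_uniformMulMatrix {x : ℂ} (hx : x ≠ 0) :
    (uniformMulMatrix m).charpoly.rootMultiplicity x =
      #{d ∈ m.divisors | x = (Nat.totient d : ℂ) / d} := by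
  have hne : (uniformMulMatrix m).charpoly ≠ 0 := (Matrix.charpoly_monic _).ne_zero
  rw [charpoly_uniformMulMatrix] at hne ⊢
  rw [rootMultiplicity_prod _ _ hne, card_filter]
  exact sum_congr rfl fun d hd => rootMultiplicity_X_pow_sub_smul_X_pow
    (Nat.totient_pos.mpr (Nat.pos_of_mem_divisors hd)).ne' _ hx

end UniformMulMatrix

section EulerProduct

variable {K : Type*} [Field K] [CharZero K]

theorem one_sub_one_div_natCast_ne_zero {q : ℕ} (hq : q ≠ 1) : 1 - 1 / (q : K) ≠ 0 := by
  rw [sub_ne_zero, ne_comm, one_div, inv_ne_one, Nat.cast_ne_one]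
  exact hq

theorem prod_one_sub_one_div_eq {S : Finset ℕ} (hS : ∀ q ∈ S, q ≠ 0) :
    ∏ q ∈ S, (1 - 1 / (q : K)) = ((∏ q ∈ S, (q - 1) : ℕ) : K) / ((∏ q ∈ S, q : ℕ) : K) := by
  rw [Nat.cast_prod, Nat.cast_prod, ← prod_div_distrib]
  refine prod_congr rfl fun q hq => ?_
  have hq0 : (q : K) ≠ 0 := Nat.cast_ne_zero.mpr (hS q hq)
  rw [Nat.cast_sub (Nat.one_le_iff_ne_zero.mpr (hS q hq)), Nat.cast_one]
  field_simp

theorem Nat.totient_div_eq_prod_one_sub_one_div {d : ℕ} (hd : d ≠ 0) :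
    (d.totient : K) / d = ∏ q ∈ d.primeFactors, (1 - 1 / (q : K)) := by
  have h := congrArg (Rat.cast : ℚ → K) (Nat.totient_eq_mul_prod_factors d)
  push_cast at h
  rw [h, mul_div_cancel_left₀ _ (Nat.cast_ne_zero.mpr hd)]
  simp [one_div]

theorem Nat.Prime.not_dvd_prod_sub_one_mul_prod {P : ℕ} (hP : P.Prime) {A B : Finset ℕ}
    (hA : ∀ q ∈ A, q.Prime) (hB : ∀ q ∈ B, q.Prime) (hAP : ∀ q ∈ A, q ≤ P) (hPB : P ∉ B) :
    ¬ P ∣ (∏ q ∈ A, (q - 1)) * ∏ q ∈ B, q := by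
  rw [hP.prime.dvd_mul, not_or, hP.prime.dvd_finsetProd_iff, hP.prime.dvd_finsetProd_iff]
  refine ⟨fun ⟨q, hq, hdvd⟩ => ?_, fun ⟨q, hq, hdvd⟩ => ?_⟩
  · have hPq := Nat.le_of_dvd (Nat.sub_pos_of_lt (hA q hq).one_lt) hdvd
    have hqP := hAP q hq
    have := hP.two_le
    omega
  · exact hPB ((Nat.prime_dvd_prime_iff_eq hP (hB q hq)).mp hdvd ▸ hq)

theorem eq_of_prod_one_sub_one_div_eq {A B : Finset ℕ} (hA : ∀ q ∈ A, q.Prime)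
    (hB : ∀ q ∈ B, q.Prime)
    (h : ∏ q ∈ A, (1 - 1 / (q : K)) = ∏ q ∈ B, (1 - 1 / (q : K))) : A = B := by
  have hA' : ∀ q ∈ A \ B, q.Prime := fun q hq => hA q (mem_sdiff.mp hq).1
  have hB' : ∀ q ∈ B \ A, q.Prime := fun q hq => hB q (mem_sdiff.mp hq).1
  have hsdiff : ∏ q ∈ A \ B, (1 - 1 / (q : K)) = ∏ q ∈ B \ A, (1 - 1 / (q : K)) := by
    rw [← prod_inter_mul_prod_sdiff A B, ← prod_inter_mul_prod_sdiff B A, inter_comm B A] at h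
    exact mul_left_cancel₀ (prod_ne_zero_iff.mpr fun q hq =>
      one_sub_one_div_natCast_ne_zero (hA q (mem_inter.mp hq).1).ne_one) h
  rw [prod_one_sub_one_div_eq fun q hq => (hA' q hq).ne_zero,
    prod_one_sub_one_div_eq fun q hq => (hB' q hq).ne_zero,
    div_eq_div_iff (Nat.cast_ne_zero.mpr (prod_ne_zero_iff.mpr fun q hq => (hA' q hq).ne_zero))
      (Nat.cast_ne_zero.mpr (prod_ne_zero_iff.mpr fun q hq => (hB' q hq).ne_zero))] at hsdiff
  have hnat : (∏ q ∈ A \ B, (q - 1)) * ∏ q ∈ B \ A, q =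
      (∏ q ∈ B \ A, (q - 1)) * ∏ q ∈ A \ B, q := by
    exact_mod_cast hsdiff
  by_contra hAB
  have hne : (A \ B ∪ B \ A).Nonempty := by
    rw [nonempty_iff_ne_empty, Ne, union_eq_empty, sdiff_eq_empty_iff_subset,
      sdiff_eq_empty_iff_subset]
    exact fun h => hAB (h.1.antisymm h.2)
  set P := (A \ B ∪ B \ A).max' hne
  have hmax : ∀ q ∈ A \ B ∪ B \ A, q ≤ P := fun q hq => le_max' _ q hq
  rcases mem_union.mp (max'_mem _ hne) with hP | hP
  · exact (hA' P hP).not_dvd_prod_sub_one_mul_prod hA' hB'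
      (fun q hq => hmax q (mem_union_left _ hq)) (fun h => (mem_sdiff.mp h).2 (mem_sdiff.mp hP).1)
      (hnat ▸ dvd_mul_of_dvd_right (dvd_prod_of_mem _ hP) _)
  · exact (hB' P hP).not_dvd_prod_sub_one_mul_prod hB' hA'
      (fun q hq => hmax q (mem_union_right _ hq)) (fun h => (mem_sdiff.mp h).2 (mem_sdiff.mp hP).1)
      (hnat.symm ▸ dvd_mul_of_dvd_right (dvd_prod_of_mem _ hP) _)

end EulerProduct

namespace Nat

variable {r : ℕ} {p : Fin r → ℕ}

theorem factorization_prod_pow_apply (hp : ∀ i, (p i).Prime) (a : Fin r → ℕ) (q : ℕ) :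
    (∏ i, p i ^ a i).factorization q = ∑ i, if p i = q then a i else 0 := by
  rw [factorization_prod fun i _ => pow_ne_zero _ (hp i).ne_zero, Finsupp.finsetSum_apply]
  simp only [(hp _).factorization_pow, Finsupp.single_apply]

theorem factorization_prod_pow_apply_self (hp : ∀ i, (p i).Prime) (hinj : p.Injective)
    (a : Fin r → ℕ) (j : Fin r) : (∏ i, p i ^ a i).factorization (p j) = a j := by
  simp [factorization_prod_pow_apply hp, hinj.eq_iff]

theorem primeFactors_prod_pow_s10 (hp : ∀ i, (p i).Prime) (a : Fin r → ℕ) :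
    (∏ i, p i ^ a i).primeFactors = (univ.filter (a · ≠ 0)).image p := by
  ext q
  rw [← support_factorization, Finsupp.mem_support_iff, factorization_prod_pow_apply hp]
  simp [sum_eq_zero_iff, and_comm]

theorem prod_pow_factorization_apply_eq_self (hp : ∀ i, (p i).Prime) (hinj : p.Injective)
    {d : ℕ} (hd : d ≠ 0) (hdp : ∀ q ∈ d.primeFactors, q ∈ Set.range p) :
    ∏ i, p i ^ d.factorization (p i) = d := by
  refine eq_of_factorization_eq (prod_ne_zero_iff.mpr fun i _ => pow_ne_zero _ (hp i).ne_zero)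
    hd fun q => ?_
  by_cases hq : q ∈ Set.range p
  · obtain ⟨j, rfl⟩ := hq
    exact factorization_prod_pow_apply_self hp hinj _ j
  · rw [factorization_prod_pow_apply hp, Finsupp.notMem_support_iff.mp
      (support_factorization d ▸ mt (hdp q) hq)]
    exact sum_eq_zero fun i _ => if_neg fun h => hq ⟨i, h⟩

theorem card_divisors_filter_primeFactors_eq (hp : ∀ i, (p i).Prime) (hinj : p.Injective)
    (e : Fin r → ℕ) (T : Finset (Fin r)) :
    #{d ∈ (∏ i, p i ^ e i).divisors | d.primeFactors = T.image p} = ∏ i ∈ T, e i := by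
  have hm : ∏ i, p i ^ e i ≠ 0 := prod_ne_zero_iff.mpr fun i _ => pow_ne_zero _ (hp i).ne_zero
  let E := Fintype.piFinset fun i => if i ∈ T then Icc 1 (e i) else {0}
  have hE : #E = ∏ i ∈ T, e i := by
    simp only [E, Fintype.card_piFinset, apply_ite card, card_Icc, card_singleton]
    simp [prod_ite_mem]
  have hT {d : ℕ} (hd : d.primeFactors = T.image p) (i : Fin r) :
      i ∈ T ↔ d.factorization (p i) ≠ 0 := by
    rw [← Finsupp.mem_support_iff, support_factorization, hd, hinj.mem_finset_image]
  rw [← hE]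
  symm
  apply card_nbij' (fun a => ∏ i, p i ^ a i) (fun d i => d.factorization (p i))
  · intro a ha
    rw [mem_coe, Fintype.mem_piFinset] at ha
    have hai (i : Fin r) : (a i ≠ 0 ↔ i ∈ T) ∧ a i ≤ e i := by
      have := ha i
      split_ifs at this with hi <;> simp_all [one_le_iff_ne_zero]
    rw [mem_coe, mem_filter, mem_divisors, primeFactors_prod_pow_s10 hp]
    refine ⟨⟨prod_dvd_prod_of_dvd _ _ fun i _ => pow_dvd_pow _ (hai i).2, hm⟩, ?_⟩
    congr 1
    ext i
    simp [(hai i).1]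
  · intro d hd
    rw [mem_coe, mem_filter, mem_divisors] at hd
    obtain ⟨⟨hdm, -⟩, hdT⟩ := hd
    rw [mem_coe, Fintype.mem_piFinset]
    intro i
    split_ifs with hi
    · have hle := (factorization_le_iff_dvd (ne_zero_of_dvd_ne_zero hm hdm) hm).mpr hdm (p i)
      rw [factorization_prod_pow_apply_self hp hinj] at hle
      exact mem_Icc.mpr ⟨one_le_iff_ne_zero.mpr ((hT hdT i).mp hi), hle⟩
    · simpa using (not_congr (hT hdT i)).mp hi
  · intro a _
    funext j
    exact factorization_prod_pow_apply_self hp hinj a j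
  · intro d hd
    rw [mem_coe, mem_filter, mem_divisors] at hd
    obtain ⟨⟨hdm, -⟩, hdT⟩ := hd
    refine prod_pow_factorization_apply_eq_self hp hinj (ne_zero_of_dvd_ne_zero hm hdm)
      fun q hq => ?_
    obtain ⟨i, -, rfl⟩ := mem_image.mp (hdT ▸ hq)
    exact ⟨i, rfl⟩

end Nat

theorem stmt10_general (r : ℕ) (p e : Fin r → ℕ) (hp : ∀ i, (p i).Prime)
    (hmono : StrictMono p)
    (m : ℕ) [NeZero m] (hm : m = ∏ i, p i ^ e i)
    (β : ZMod m → ℝ) (hβ : ∀ x, β x = 1 / (m : ℝ)) :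
    ∀ T : Finset (Fin r),
      (((Bmat (ZMod m) β).map (fun t : ℝ => (t : ℂ))).charpoly).rootMultiplicity
          (∏ i ∈ T, (1 - 1 / (p i : ℂ))) =
        ∏ i ∈ T, e i := by
  intro T
  obtain rfl : β = fun _ => 1 / (m : ℝ) := funext hβ
  have hinj : p.Injective := hmono.injective
  have hT : ∏ i ∈ T, (1 - 1 / (p i : ℂ)) = ∏ q ∈ T.image p, (1 - 1 / (q : ℂ)) :=
    (prod_image hinj.injOn (f := fun q : ℕ => 1 - 1 / (q : ℂ))).symm
  have hTp : ∀ q ∈ T.image p, q.Prime := by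
    simp only [mem_image]
    rintro q ⟨i, -, rfl⟩
    exact hp i
  change (uniformMulMatrix m).charpoly.rootMultiplicity _ = _
  rw [rootMultiplicity_charpoly_uniformMulMatrix
      (prod_ne_zero_iff.mpr fun i _ => one_sub_one_div_natCast_ne_zero (hp i).ne_one),
    ← Nat.card_divisors_filter_primeFactors_eq hp hinj e T, ← hm, hT]
  congr 1
  refine filter_congr fun d hd => ?_
  rw [Nat.totient_div_eq_prod_one_sub_one_div (Nat.pos_of_mem_divisors hd).ne']
  exact ⟨fun h => eq_of_prod_one_sub_one_div_eq (fun q => Nat.prime_of_mem_primeFactors) hTp h.symm,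
    fun h => h ▸ rfl⟩

/-- For `R = ℤ/mℤ` with `m = p₁^{e₁}⋯p_r^{e_r}` and uniform multiplication
probabilities, the algebraic multiplicity of the eigenvalue
`∏_{i∈T}(1 − 1/p_i)` of `B_R` is `∏_{i∈T} e_i`. -/
theorem stmt10 (r : ℕ) (p e : Fin r → ℕ) (hp : ∀ i, (p i).Prime)
    (hmono : StrictMono p) (he : ∀ i, 1 ≤ e i)
    (m : ℕ) [NeZero m] (hm : m = ∏ i, p i ^ e i)
    (β : ZMod m → ℝ) (hβ : ∀ x, β x = 1 / (m : ℝ)) :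
    ∀ T : Finset (Fin r),
      (((Bmat (ZMod m) β).map (fun t : ℝ => (t : ℂ))).charpoly).rootMultiplicity
          (∏ i ∈ T, (1 - 1 / (p i : ℂ))) =
        ∏ i ∈ T, e i :=
  stmt10_general r p e hp hmono m hm β hβ
end

section
/- Let R be a finite chain ring. Then: (i) for every character χ : Rˣ → ℂˣ, the number ∑_{x∈Rˣ} β(x)·χ(x) is a root of the characteristic polynomial of B_R (regarded as a complex matrix); and (ii) conversely, every root of the characteristic polynomial of B_R is either 1 or equal to ∑_{x∈Rˣ} β(x)·χ(x) for some character χ of Rˣ. -/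
/-!
Write `M` for `B_R` over `ℂ`, so `(M w) a = ∑ₓ β(x) w(a x)`. If `χ` is a character of `Rˣ`,
extended by zero to a multiplicative character of `R`, then `M χ = (∑ᵤ β(u) χ(u)) χ`.

Conversely, let `M w = μ w` with `w ≠ 0`. If `w 0 ≠ 0`, evaluating at `0` gives `μ = 1`.
Otherwise pick `a` with `w a ≠ 0` and `aR` minimal. In a local ring `a x R ⊊ a R` whenever
`a ≠ 0` and `x` is a nonunit, so `w` vanishes on `a v x` for all units `v`. The eigenvalue equation at the points `a v` then
says that `v ↦ w (a v)` is an eigenvector of `f ↦ (v ↦ ∑ᵤ β(u) f(v u))` on `Rˣ`. This operator is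
diagonal in the basis of characters of the finite abelian group `Rˣ`, so `μ = ∑ᵤ β(u) χ(u)` for
some character `χ`.
-/

open Finset Polynomial

open scoped Classical

open Matrix Module.End

theorem Matrix.isRoot_charpoly_iff_exists_mulVec_eq_smul {K n : Type*} [Field K] [Fintype n]
    [DecidableEq n] (A : Matrix n n K) (μ : K) :
    A.charpoly.IsRoot μ ↔ ∃ v ≠ 0, A *ᵥ v = μ • v := by
  rw [← Matrix.charpoly_toLin', ← hasEigenvalue_iff_isRoot_charpoly]
  constructor
  · intro h
    obtain ⟨v, hv⟩ := h.exists_hasEigenvector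
    exact ⟨v, hv.2, mem_eigenspace_iff.mp hv.1⟩
  · rintro ⟨v, hv0, hv⟩
    exact hasEigenvalue_of_hasEigenvector ⟨mem_eigenspace_iff.mpr hv, hv0⟩

theorem sum_eq_sum_units_of_nonunit_eq_zero {R M : Type*} [Monoid R] [Fintype R] [Fintype Rˣ]
    [AddCommMonoid M] (g : R → M) (hg : ∀ x, ¬IsUnit x → g x = 0) :
    ∑ x, g x = ∑ u : Rˣ, g u :=
  (Fintype.sum_of_injective _ Units.val_injective _ g (fun x hx => hg x hx) fun _ => rfl).symm

theorem AddChar.exists_eq_sum_of_eigenvector {A : Type*} [AddCommGroup A] [Fintype A]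
    (γ : A → ℂ) {f : A → ℂ} (hf : f ≠ 0) {μ : ℂ}
    (h : ∀ v, ∑ u, γ u * f (v + u) = μ * f v) :
    ∃ ψ : AddChar A ℂ, μ = ∑ u, γ u * ψ u := by
  let T : (A → ℂ) →ₗ[ℂ] A → ℂ :=
    { toFun := fun f v => ∑ u, γ u * f (v + u)
      map_add' := fun f g => funext fun v => by simp [mul_add, sum_add_distrib]
      map_smul' := fun c f => funext fun v => by simp [mul_sum, mul_left_comm] }
  let b := AddChar.complexBasis A
  have hT : T = toLin b b (diagonal fun ψ => ∑ u, γ u * ψ u) := b.ext fun ψ => by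
    rw [(hasEigenvector_toLin_diagonal _ ψ b).apply_eq_smul]
    funext v
    simp only [T, b, complexBasis_apply, LinearMap.coe_mk, AddHom.coe_mk, map_add_eq_mul,
      Pi.smul_apply, smul_eq_mul, sum_mul]
    exact sum_congr rfl fun u _ => by ring
  have hμ : HasEigenvalue T μ :=
    hasEigenvalue_of_hasEigenvector ⟨mem_eigenspace_iff.mpr (funext h), hf⟩
  rw [hT, hasEigenvalue_toLin_diagonal_iff] at hμ
  obtain ⟨ψ, hψ⟩ := hμ
  exact ⟨ψ, hψ.symm⟩

theorem MonoidHom.exists_eq_sum_of_eigenvector {G : Type*} [CommGroup G] [Fintype G]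
    (γ : G → ℂ) {f : G → ℂ} (hf : f ≠ 0) {μ : ℂ}
    (h : ∀ v, ∑ u, γ u * f (v * u) = μ * f v) :
    ∃ χ : G →* ℂˣ, μ = ∑ u, γ u * χ u := by
  have sum_additive (g : G → ℂ) : ∑ u : Additive G, g u.toMul = ∑ u, g u :=
    Fintype.sum_equiv Additive.toMul _ _ fun _ => rfl
  obtain ⟨ψ, hψ⟩ := AddChar.exists_eq_sum_of_eigenvector (A := Additive G) (γ ∘ Additive.toMul)
    (f := f ∘ Additive.toMul) hf fun v => (sum_additive _).trans (h v.toMul)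
  exact ⟨ψ.toMonoidHom.toHomUnits, hψ.trans (sum_additive fun u => γ u * ψ (Additive.ofMul u))⟩

namespace IsLocalRing

variable {R : Type*} [CommRing R] [IsLocalRing R]

theorem eq_zero_of_mul_dvd {a x : R} (hx : ¬IsUnit x) (h : a * x ∣ a) : a = 0 := by
  obtain ⟨y, hy⟩ := h
  have hunit : IsUnit (1 - x * y) :=
    isUnit_one_sub_self_of_mem_nonunits _ (mul_mem_nonunits_left hx)
  exact hunit.mul_left_eq_zero.mp (by linear_combination hy)

theorem exists_ne_zero_forall_mul_nonunit_eq_zero [Finite R] {M : Type*} [Zero M] {w : R → M}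
    (hw : w ≠ 0) (h0 : w 0 = 0) : ∃ a, w a ≠ 0 ∧ ∀ x, ¬IsUnit x → w (a * x) = 0 := by
  obtain ⟨a, ha, hmin⟩ := Set.Finite.exists_minimalFor (fun a => Ideal.span {a})
    {a | w a ≠ 0} (Set.toFinite _) (Function.ne_iff.mp hw)
  refine ⟨a, ha, fun x hx => by_contra fun hax => ha ?_⟩
  have hdvd : a * x ∣ a := Ideal.span_singleton_le_span_singleton.mp
    (hmin hax (Ideal.span_singleton_le_span_singleton.mpr (dvd_mul_right a x)))
  rw [eq_zero_of_mul_dvd hx hdvd, h0]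

end IsLocalRing

section Bmat

variable {R : Type} [CommRing R] [Fintype R] (β : R → ℝ)

theorem Bmat_map_mulVec (v : R → ℂ) (a : R) :
    ((Bmat R β).map (fun t : ℝ => (t : ℂ)) *ᵥ v) a = ∑ x, (β x : ℂ) * v (a * x) := by
  simp only [mulVec, dotProduct, map_apply, Bmat, Complex.ofReal_sum, sum_mul]
  rw [← sum_fiberwise univ (a * ·) fun x => (β x : ℂ) * v (a * x)]
  refine sum_congr rfl fun b _ => sum_congr rfl fun x hx => ?_
  rw [(mem_filter.mp hx).2]

theorem Bmat_map_mulVec_mulChar (χ : MulChar R ℂ) :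
    (Bmat R β).map (fun t : ℝ => (t : ℂ)) *ᵥ χ = (∑ x, (β x : ℂ) * χ x) • ⇑χ := by
  funext a
  simp only [Bmat_map_mulVec, map_mul, Pi.smul_apply, smul_eq_mul, sum_mul]
  exact sum_congr rfl fun x _ => by ring

theorem eq_one_of_Bmat_map_mulVec_eq_smul (hβsum : ∑ x, β x = 1) {w : R → ℂ} (h0 : w 0 ≠ 0)
    {μ : ℂ} (h : (Bmat R β).map (fun t : ℝ => (t : ℂ)) *ᵥ w = μ • w) : μ = 1 := by
  have h_at_zero := congrFun h 0
  rw [Bmat_map_mulVec] at h_at_zero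
  simp only [zero_mul, ← sum_mul, ← Complex.ofReal_sum, hβsum, Complex.ofReal_one, one_mul,
    Pi.smul_apply, smul_eq_mul] at h_at_zero
  exact mul_right_cancel₀ h0 (by rw [one_mul]; exact h_at_zero.symm)

theorem exists_eq_sum_of_Bmat_map_mulVec_eq_smul [IsLocalRing R] {w : R → ℂ} (hw : w ≠ 0)
    (h0 : w 0 = 0) {μ : ℂ} (h : (Bmat R β).map (fun t : ℝ => (t : ℂ)) *ᵥ w = μ • w) :
    ∃ χ : Rˣ →* ℂˣ, μ = ∑ u : Rˣ, (β u : ℂ) * χ u := by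
  obtain ⟨a, ha, hvanish⟩ := IsLocalRing.exists_ne_zero_forall_mul_nonunit_eq_zero hw h0
  refine MonoidHom.exists_eq_sum_of_eigenvector (fun u : Rˣ => (β u : ℂ))
    (f := fun v : Rˣ => w (a * v)) (fun hf => ha (by simpa using congrFun hf 1)) fun v => ?_
  calc ∑ u : Rˣ, (β u : ℂ) * w (a * ↑(v * u))
      = ∑ u : Rˣ, (β u : ℂ) * w (a * v * u) := by simp only [Units.val_mul, mul_assoc]
    _ = ∑ x, (β x : ℂ) * w (a * v * x) := by
        refine (sum_eq_sum_units_of_nonunit_eq_zero (fun x => (β x : ℂ) * w (a * v * x))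
          fun x hx => ?_).symm
        rw [mul_assoc, hvanish _ fun hvx => hx (isUnit_of_mul_isUnit_right hvx), mul_zero]
    _ = μ * w (a * v) := by rw [← Bmat_map_mulVec, h]; rfl

end Bmat

theorem stmt11_general (R : Type) [CommRing R] [Fintype R] [IsLocalRing R]
    (β : R → ℝ) (hβsum : ∑ x, β x = 1) :
    (∀ χ : Rˣ →* ℂˣ,
      (((Bmat R β).map (fun t : ℝ => (t : ℂ))).charpoly).IsRoot
        (∑ x : Rˣ, (β (x : R) : ℂ) * (χ x : ℂ))) ∧
    (∀ lam : ℂ,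
      (((Bmat R β).map (fun t : ℝ => (t : ℂ))).charpoly).IsRoot lam →
        lam = 1 ∨ ∃ χ : Rˣ →* ℂˣ, lam = ∑ x : Rˣ, (β (x : R) : ℂ) * (χ x : ℂ)) := by
  refine ⟨fun χ => ?_, fun lam hlam => ?_⟩
  · rw [isRoot_charpoly_iff_exists_mulVec_eq_smul]
    let χ' := MulChar.ofUnitHom χ
    have hsum : ∑ x, (β x : ℂ) * χ' x = ∑ u : Rˣ, (β u : ℂ) * χ u := by
      rw [sum_eq_sum_units_of_nonunit_eq_zero _ fun x hx => by rw [χ'.map_nonunit hx, mul_zero]]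
      simp [χ']
    refine ⟨χ', fun h => one_ne_zero (congrFun h 1 ▸ χ'.map_one.symm), ?_⟩
    rw [Bmat_map_mulVec_mulChar, hsum]
  · obtain ⟨w, hw, hwlam⟩ := (isRoot_charpoly_iff_exists_mulVec_eq_smul _ _).mp hlam
    by_cases h0 : w 0 = 0
    · exact Or.inr (exists_eq_sum_of_Bmat_map_mulVec_eq_smul β hw h0 hwlam)
    · exact Or.inl (eq_one_of_Bmat_map_mulVec_eq_smul β hβsum h0 hwlam)

/-- For a finite chain ring `R` (a finite commutative local principal ideal
ring), the eigenvalues of `B_R` other than `1` are exactly the sums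
`∑_{x∈Rˣ} β(x)·χ(x)` over characters `χ` of `Rˣ`. -/
theorem stmt11 (R : Type) [CommRing R] [Fintype R] [IsLocalRing R]
    [IsPrincipalIdealRing R]
    (β : R → ℝ) (hβ : ∀ x, 0 ≤ β x) (hβsum : ∑ x, β x = 1) :
    (∀ χ : Rˣ →* ℂˣ,
      (((Bmat R β).map (fun t : ℝ => (t : ℂ))).charpoly).IsRoot
        (∑ x : Rˣ, (β (x : R) : ℂ) * (χ x : ℂ))) ∧
    (∀ lam : ℂ,
      (((Bmat R β).map (fun t : ℝ => (t : ℂ))).charpoly).IsRoot lam →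
        lam = 1 ∨ ∃ χ : Rˣ →* ℂˣ, lam = ∑ x : Rˣ, (β (x : R) : ℂ) * (χ x : ℂ)) :=
  stmt11_general R β hβsum
end

section
/- Let R be a finite chain ring with maximal ideal m, let k be the least positive integer with m^k = 0, and suppose β(x) = 1/|R| for all x ∈ R. Then the characteristic polynomial of B_R (regarded as a complex matrix) equals (X − 1)·(X − |Rˣ|/|R|)^k·X^{|R|−k−1}; that is, B_R has eigenvalues 1, |Rˣ|/|R| and 0 with algebraic multiplicities 1, k and |R| − k − 1 respectively. -/
/-!
Write the maximal ideal as `(π)`. Every `a ∈ R` is a unit times `π ^ v a` with `v a ∈ {0, …, k}`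
(and `v 0 = k`), and the row of `B_R` at `a` only depends on `v a`. Hence `B_R = U N`, where `U` is
the `0/1` matrix of `v : R → {0, …, k}` and `N` holds the rows at `1, π, …, π ^ k`, so
`charpoly B_R = X ^ (|R| - k - 1) * charpoly (N U)`. The `(k+1) × (k+1)` matrix `N U` is upper
triangular, its `(p, q)` entry being the proportion of `x` with `v (π ^ p * x) = q`; on the diagonal
this is `|Rˣ| / |R|` for `p < k`, since `v (π ^ p * x) = p` exactly when `x` is a unit, and `1` for
`p = k`.
-/

open Finset Polynomial

open scoped Classical

open IsLocalRing

namespace Matrix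

variable {ι κ R : Type*} [Fintype ι] [Fintype κ] [DecidableEq κ] [CommRing R]

theorem charpoly_submatrix_id_eq (N : Matrix κ ι R) (f : ι → κ)
    (hcard : Fintype.card κ ≤ Fintype.card ι) :
    (N.submatrix f id).charpoly =
      X ^ (Fintype.card ι - Fintype.card κ) * (of fun p q => ∑ b with f b = q, N p b).charpoly := by
  let U : Matrix ι κ R := of fun a p => if f a = p then 1 else 0
  have hUN : N.submatrix f id = U * N := by
    ext a b
    simp [U, mul_apply]
  have hNU : N * U = of fun p q => ∑ b with f b = q, N p b := by
    ext p q
    simp [U, mul_apply, sum_filter]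
  rw [hUN, charpoly_mul_comm_of_le _ _ hcard, hNU]

end Matrix

theorem card_filter_isUnit (M : Type*) [Monoid M] [Fintype M] :
    #{x : M | IsUnit x} = Fintype.card Mˣ := by
  refine (card_bij (fun (u : Mˣ) _ => (u : M)) (fun u _ => by simp) (fun _ _ _ _ => Units.ext)
    fun x hx => ?_).symm
  obtain ⟨u, rfl⟩ := (mem_filter.mp hx).2
  exact ⟨u, mem_univ _, rfl⟩

section Uniformizer

variable {R : Type*} [CommRing R]

variable (π : R) in
noncomputable def cappedOrd (k : ℕ) (a : R) : ℕ :=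
  Nat.findGreatest (fun i => π ^ i ∣ a) k

variable {π : R} {k i : ℕ} {a x : R}

theorem cappedOrd_le : cappedOrd π k a ≤ k :=
  Nat.findGreatest_le k

theorem pow_cappedOrd_dvd : π ^ cappedOrd π k a ∣ a :=
  Nat.findGreatest_spec (P := fun i => π ^ i ∣ a) (Nat.zero_le k) (by simp)

theorem le_cappedOrd (hi : i ≤ k) (h : π ^ i ∣ a) : i ≤ cappedOrd π k a :=
  Nat.le_findGreatest hi h

theorem not_pow_dvd_of_cappedOrd_lt (hi : cappedOrd π k a < i) (hik : i ≤ k) : ¬π ^ i ∣ a :=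
  Nat.findGreatest_is_greatest hi hik

theorem cappedOrd_zero : cappedOrd π k 0 = k :=
  le_antisymm cappedOrd_le (le_cappedOrd le_rfl (dvd_zero _))

theorem le_cappedOrd_pow_mul (hi : i ≤ k) : i ≤ cappedOrd π k (π ^ i * x) :=
  le_cappedOrd hi (dvd_mul_right _ _)

variable [IsLocalRing R] (hπ : maximalIdeal R = Ideal.span {π})
include hπ

theorem dvd_of_not_isUnit (hx : ¬IsUnit x) : π ∣ x := by
  rw [← Ideal.mem_span_singleton, ← hπ]
  exact (mem_maximalIdeal x).mpr hx

theorem not_pow_succ_dvd_pow (hmin : ∀ j, π ^ j = 0 → k ≤ j) (hi : i < k) :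
    ¬π ^ (i + 1) ∣ π ^ i := by
  rintro ⟨c, hc⟩
  have hunit : IsUnit (1 - π * c) := by
    refine isUnit_one_sub_self_of_mem_nonunits _ ((mem_maximalIdeal _).mp ?_)
    rw [hπ]
    exact Ideal.mul_mem_right c _ (Ideal.mem_span_singleton_self π)
  have hzero : π ^ i = 0 := by
    refine hunit.mul_left_eq_zero.mp ?_
    linear_combination hc
  exact absurd (hmin i hzero) (not_le.mpr hi)

theorem associated_pow_cappedOrd (hk : π ^ k = 0) (a : R) :
    Associated (π ^ cappedOrd π k a) a := by
  obtain ⟨c, hc⟩ : π ^ cappedOrd π k a ∣ a := pow_cappedOrd_dvd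
  rcases (cappedOrd_le : cappedOrd π k a ≤ k).eq_or_lt with hak | hak
  · rw [hak, hk, zero_mul] at hc
    rw [hak, hk, hc]
  · have hcu : IsUnit c := by
      by_contra hcu
      obtain ⟨d, rfl⟩ := dvd_of_not_isUnit hπ hcu
      exact not_pow_dvd_of_cappedOrd_lt (Nat.lt_add_one _) hak ⟨d, hc.trans (by ring)⟩
    conv_rhs => rw [hc]
    exact associated_mul_unit_right _ _ hcu

theorem cappedOrd_pow_mul_eq_iff (hmin : ∀ j, π ^ j = 0 → k ≤ j) (hi : i < k) :
    cappedOrd π k (π ^ i * x) = i ↔ IsUnit x := by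
  constructor
  · intro hx
    by_contra hxu
    obtain ⟨d, rfl⟩ := dvd_of_not_isUnit hπ hxu
    have hlt : cappedOrd π k (π ^ i * (π * d)) < i + 1 := by omega
    exact not_pow_dvd_of_cappedOrd_lt hlt hi ⟨d, by ring⟩
  · rintro ⟨u, rfl⟩
    refine le_antisymm ?_ (le_cappedOrd_pow_mul hi.le)
    by_contra! hlt
    exact not_pow_succ_dvd_pow hπ hmin hi
      (Units.dvd_mul_right.mp ((pow_dvd_pow π hlt).trans pow_cappedOrd_dvd))

theorem cappedOrd_pow (hk : π ^ k = 0) (hmin : ∀ j, π ^ j = 0 → k ≤ j) (hi : i ≤ k) :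
    cappedOrd π k (π ^ i) = i := by
  rcases hi.eq_or_lt with rfl | hi
  · rw [hk, cappedOrd_zero]
  · simpa using (cappedOrd_pow_mul_eq_iff (x := 1) hπ hmin hi).mpr isUnit_one

theorem card_cappedOrd_pow_mul_eq [Fintype R] (hmin : ∀ j, π ^ j = 0 → k ≤ j) (hi : i < k) :
    #{x | cappedOrd π k (π ^ i * x) = i} = Fintype.card Rˣ := by
  rw [← card_filter_isUnit]
  exact congrArg card (filter_congr fun x _ => cappedOrd_pow_mul_eq_iff hπ hmin hi)

end Uniformizer

section Bmat

variable {R : Type} [CommRing R] [Fintype R]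

theorem Bmat_row_eq_of_associated {β : R → ℝ} (hβ : ∀ (u : Rˣ) x, β (u * x) = β x) {a a' : R}
    (h : Associated a a') : Bmat R β a' = Bmat R β a := by
  obtain ⟨u, rfl⟩ := h
  funext b
  simp only [Bmat, sum_filter]
  exact Fintype.sum_equiv u.mulLeft _ _ fun x => by simp [hβ, mul_assoc]

theorem sum_Bmat_apply (β : R → ℝ) (a : R) (s : Finset R) :
    ∑ b ∈ s, Bmat R β a b = ∑ x with a * x ∈ s, β x :=
  sum_fiberwise_eq_sum_filter univ s (a * ·) β

end Bmat

theorem charpoly_Bmat_of_uniform {R : Type} [CommRing R] [Fintype R] [IsLocalRing R] {π : R}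
    {k : ℕ} (hπ : maximalIdeal R = Ideal.span {π}) (hk : π ^ k = 0)
    (hmin : ∀ j, π ^ j = 0 → k ≤ j) {β : R → ℝ} (hβ : ∀ x, β x = 1 / Fintype.card R) :
    (Bmat R β).charpoly = (X - C 1) * (X - C (Fintype.card Rˣ / Fintype.card R : ℝ)) ^ k *
      X ^ (Fintype.card R - k - 1) := by
  let v : R → Fin (k + 1) := fun a => ⟨cappedOrd π k a, Nat.lt_succ_of_le cappedOrd_le⟩
  let N : Matrix (Fin (k + 1)) R ℝ := Matrix.of fun p b => Bmat R β (π ^ (p : ℕ)) b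
  have hB : Bmat R β = N.submatrix v id := by
    ext a b
    exact congrFun (Bmat_row_eq_of_associated (by simp [hβ]) (associated_pow_cappedOrd hπ hk a)) b
  have hv : Function.Surjective v := fun p =>
    ⟨π ^ (p : ℕ), Fin.ext (cappedOrd_pow hπ hk hmin p.is_le)⟩
  have hlump : ∀ p q : Fin (k + 1), ∑ b with v b = q, N p b =
      #{x | cappedOrd π k (π ^ (p : ℕ) * x) = q} / Fintype.card R := by
    intro p q
    simp [N, sum_Bmat_apply, hβ, v, Fin.ext_iff, div_eq_mul_inv]
  have hlast : #{x | cappedOrd π k (π ^ k * x) = k} = Fintype.card R := by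
    simp [hk, cappedOrd_zero]
  have htri : (Matrix.of fun p q => ∑ b with v b = q, N p b).IsUpperTriangular := by
    intro p q hqp
    rw [Matrix.of_apply, hlump, card_eq_zero.mpr, Nat.cast_zero, zero_div]
    refine filter_eq_empty_iff.mpr fun x _ => ?_
    have hqp : (q : ℕ) < p := hqp
    have := le_cappedOrd_pow_mul (π := π) (x := x) p.is_le
    omega
  rw [hB, Matrix.charpoly_submatrix_id_eq N v (Fintype.card_le_of_surjective v hv),
    Matrix.charpoly_of_isUpperTriangular _ htri, Fin.prod_univ_castSucc]
  simp only [Matrix.of_apply, hlump, Fin.val_castSucc, Fin.val_last, hlast, prod_const, card_univ,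
    Fintype.card_fin, fun i : Fin k => card_cappedOrd_pow_mul_eq hπ hmin i.is_lt]
  rw [div_self (by simp), Nat.sub_sub]
  ring

theorem stmt12_general (R : Type) [CommRing R] [Fintype R] [IsLocalRing R]
    [IsPrincipalIdealRing R]
    (k : ℕ) (hk : IsLocalRing.maximalIdeal R ^ k = ⊥)
    (hkmin : ∀ j : ℕ, 0 < j → IsLocalRing.maximalIdeal R ^ j = ⊥ → k ≤ j)
    (β : R → ℝ) (hβ : ∀ x, β x = 1 / (Fintype.card R : ℝ)) :
    ((Bmat R β).map (fun t : ℝ => (t : ℂ))).charpoly =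
      (Polynomial.X - Polynomial.C 1) *
        (Polynomial.X -
          Polynomial.C ((Fintype.card Rˣ : ℂ) / (Fintype.card R : ℂ))) ^ k *
        Polynomial.X ^ (Fintype.card R - k - 1) := by
  obtain ⟨π, hπ⟩ := (IsPrincipalIdealRing.principal (maximalIdeal R)).principal
  rw [Ideal.submodule_span_eq] at hπ
  have hpow : ∀ j, maximalIdeal R ^ j = ⊥ ↔ π ^ j = 0 := fun j => by
    rw [hπ, Ideal.span_singleton_pow, Ideal.span_singleton_eq_bot]
  have hmin : ∀ j, π ^ j = 0 → k ≤ j := by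
    rintro (_ | j) hj
    · simp at hj
    · exact hkmin _ j.succ_pos ((hpow _).mpr hj)
  rw [show (fun t : ℝ => (t : ℂ)) = Complex.ofRealHom from rfl, Matrix.charpoly_map,
    charpoly_Bmat_of_uniform hπ ((hpow k).mp hk) hmin hβ]
  simp

/-- For a finite chain ring `R` of length `k` with uniform multiplication
probabilities, the characteristic polynomial of `B_R` is
`(X − 1)·(X − |Rˣ|/|R|)^k·X^{|R|−k−1}`. -/
theorem stmt12 (R : Type) [CommRing R] [Fintype R] [IsLocalRing R]
    [IsPrincipalIdealRing R]
    (k : ℕ) (hk0 : 0 < k) (hk : IsLocalRing.maximalIdeal R ^ k = ⊥)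
    (hkmin : ∀ j : ℕ, 0 < j → IsLocalRing.maximalIdeal R ^ j = ⊥ → k ≤ j)
    (β : R → ℝ) (hβ : ∀ x, β x = 1 / (Fintype.card R : ℝ)) :
    ((Bmat R β).map (fun t : ℝ => (t : ℂ))).charpoly =
      (Polynomial.X - Polynomial.C 1) *
        (Polynomial.X -
          Polynomial.C ((Fintype.card Rˣ : ℂ) / (Fintype.card R : ℂ))) ^ k *
        Polynomial.X ^ (Fintype.card R - k - 1) :=
  stmt12_general R k hk hkmin β hβ
end

section
/- Let π be a stationary distribution of M_R. If a, b ∈ R generate the same principal ideal, i.e. aR = bR, then π(a) = π(b). -/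
open Finset

open scoped Classical

/-- The transition matrix `M_R(a,b) = α/|R| + (1−α)·B_R(a,b)`. -/
noncomputable def Mmat (R : Type) [CommRing R] [Fintype R] (α : ℝ) (β : R → ℝ) :
    Matrix R R ℝ :=
  fun a b => α / (Fintype.card R : ℝ) + (1 - α) * Bmat R β a b

/-!
In a finite commutative ring, `aR = bR` forces `b = a u` for a unit `u`: if `b = a s` and
`a = b t`, some power `e` of `s t` is idempotent, and `s e + (1 - e)` is such a unit.
Multiplication by `u` is an automorphism of the chain, `M_R(x u, y u) = M_R(x, y)`, so
`d = π(· u) - π` satisfies `d M_R = d`. Since `∑ d = 0`, the uniform part of `M_R` kills `d`,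
leaving `d = (1 - α) d B_R`; as the stochastic matrix `B_R` does not increase the `ℓ¹` norm and
`1 - α < 1`, this forces `d = 0`.
-/

theorem exists_pow_succ_isIdempotentElem {M : Type*} [Monoid M] [Finite M] (c : M) :
    ∃ n : ℕ, IsIdempotentElem (c ^ (n + 1)) := by
  let : TopologicalSpace M := ⊥
  have : DiscreteTopology M := ⟨rfl⟩
  obtain ⟨_, ⟨n, rfl⟩, h⟩ := exists_idempotent_in_compact_subsemigroup
    (fun _ => continuous_of_discreteTopology) (Set.range fun n : ℕ => c ^ (n + 1))
    (Set.range_nonempty _) (Set.toFinite _).isCompact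
    (by rintro _ ⟨m, rfl⟩ _ ⟨k, rfl⟩; exact ⟨m + k + 1, by rw [← pow_add]; ring_nf⟩)
  exact ⟨n, h⟩

theorem associated_of_dvd_dvd_of_finite {R : Type*} [CommRing R] [Finite R] {a b : R}
    (hab : a ∣ b) (hba : b ∣ a) : Associated a b := by
  obtain ⟨s, rfl⟩ := hab
  obtain ⟨t, ht⟩ := hba
  obtain ⟨n, he⟩ := exists_pow_succ_isIdempotentElem (s * t)
  set e := (s * t) ^ (n + 1) with he_def
  have hst_fix : a * (s * t) = a := by linear_combination -ht
  have hae : ∀ k : ℕ, a * (s * t) ^ k = a := by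
    intro k
    induction k with
    | zero => rw [pow_zero, mul_one]
    | succ k ih => rw [pow_succ, ← mul_assoc, ih, hst_fix]
  have hst : s * t * (s * t) ^ n = e := by rw [he_def, pow_succ']
  -- `e` splits `R` as `eR × (1 - e)R`; `s` is invertible in the first factor, with inverse `t (st)ⁿ`.
  refine ⟨⟨s * e + (1 - e), t * (s * t) ^ n * e + (1 - e), ?_, ?_⟩, ?_⟩
  · linear_combination (e + 2 - s - t * (s * t) ^ n) * he.eq + e ^ 2 * hst
  · linear_combination (e + 2 - s - t * (s * t) ^ n) * he.eq + e ^ 2 * hst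
  · change a * (s * e + (1 - e)) = a * s
    linear_combination (s - 1) * hae (n + 1)

namespace Matrix

variable {n : Type*} [Fintype n]

theorem comp_equiv_vecMul_of_submatrix_eq {α : Type*} [NonUnitalNonAssocSemiring α]
    {M : Matrix n n α} {e : n ≃ n} (hM : M.submatrix e e = M) (v : n → α) :
    (v ∘ e) ᵥ* M = (v ᵥ* M) ∘ e := by
  conv_lhs => rw [← hM]
  rw [submatrix_vecMul_equiv, Function.comp_assoc, e.self_comp_symm, Function.comp_id]

variable [DecidableEq n]

theorem sum_abs_vecMul_le_of_mem_rowStochastic {M : Matrix n n ℝ}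
    (hM : M ∈ rowStochastic ℝ n) (x : n → ℝ) : ∑ j, |(x ᵥ* M) j| ≤ ∑ i, |x i| :=
  calc ∑ j, |∑ i, x i * M i j|
      ≤ ∑ j, ∑ i, |x i| * M i j := by
        gcongr with j
        refine (abs_sum_le_sum_abs _ _).trans_eq (sum_congr rfl fun i _ => ?_)
        rw [abs_mul, abs_of_nonneg (nonneg_of_mem_rowStochastic hM)]
    _ = ∑ i, |x i| := by
        rw [sum_comm]
        simp_rw [← mul_sum, sum_row_of_mem_rowStochastic hM, mul_one]

theorem eq_zero_of_eq_smul_vecMul_of_mem_rowStochastic {M : Matrix n n ℝ}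
    (hM : M ∈ rowStochastic ℝ n) {c : ℝ} (hc : |c| < 1) {x : n → ℝ} (hx : x = c • x ᵥ* M) :
    x = 0 := by
  have hle : ∑ i, |x i| ≤ |c| * ∑ i, |x i| :=
    calc ∑ i, |x i| = |c| * ∑ j, |(x ᵥ* M) j| := by
          conv_lhs => rw [hx]
          simp only [Pi.smul_apply, smul_eq_mul, abs_mul, mul_sum]
      _ ≤ |c| * ∑ i, |x i| :=
          mul_le_mul_of_nonneg_left (sum_abs_vecMul_le_of_mem_rowStochastic hM x) (abs_nonneg c)
  have hzero : ∑ i, |x i| = 0 := by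
    nlinarith [sum_nonneg fun i (_ : i ∈ univ) => abs_nonneg (x i)]
  ext i
  exact abs_eq_zero.mp ((sum_eq_zero_iff_of_nonneg fun j _ => abs_nonneg (x j)).mp hzero i
    (mem_univ i))

end Matrix

open Matrix

section TransitionMatrix

variable {R : Type} [CommRing R] [Fintype R]

theorem Bmat_mem_rowStochastic {β : R → ℝ} (hβ : ∀ x, 0 ≤ β x) (hβsum : ∑ x, β x = 1) :
    Bmat R β ∈ rowStochastic ℝ R :=
  mem_rowStochastic_iff_sum.mpr
    ⟨fun _ _ => sum_nonneg fun x _ => hβ x,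
      fun a => (sum_fiberwise univ (a * ·) β).trans hβsum⟩

theorem Bmat_mul_units (β : R → ℝ) (u : Rˣ) (a b : R) :
    Bmat R β (a * u) (b * u) = Bmat R β a b := by
  refine sum_congr (filter_congr fun x _ => ?_) fun _ _ => rfl
  rw [mul_right_comm, Units.mul_left_inj]

theorem Mmat_submatrix_mulRight (α : ℝ) (β : R → ℝ) (u : Rˣ) :
    (Mmat R α β).submatrix (Units.mulRight u) (Units.mulRight u) = Mmat R α β := by
  ext a b
  simp only [submatrix_apply, Units.mulRight_apply, Mmat, Bmat_mul_units]

theorem vecMul_Mmat_of_sum_eq_zero (α : ℝ) (β : R → ℝ) {x : R → ℝ} (hx : ∑ i, x i = 0) :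
    x ᵥ* Mmat R α β = (1 - α) • x ᵥ* Bmat R β := by
  ext b
  simp only [vecMul, dotProduct, Mmat, mul_add, sum_add_distrib, ← sum_mul, hx, zero_mul,
    zero_add, Pi.smul_apply, smul_eq_mul, mul_sum]
  exact sum_congr rfl fun _ _ => by ring

end TransitionMatrix

theorem stmt13_general (R : Type) [CommRing R] [Fintype R]
    (α : ℝ) (hα0 : 0 < α) (hα1 : α < 1)
    (β : R → ℝ) (hβ : ∀ x, 0 ≤ β x) (hβsum : ∑ x, β x = 1)
    (π : R → ℝ)
    (hπstat : ∀ b : R, ∑ a : R, π a * Mmat R α β a b = π b)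
    (a b : R) (hab : Ideal.span ({a} : Set R) = Ideal.span {b}) :
    π a = π b := by
  obtain ⟨u, rfl⟩ := associated_of_dvd_dvd_of_finite
    (Ideal.span_singleton_le_span_singleton.mp hab.ge)
    (Ideal.span_singleton_le_span_singleton.mp hab.le)
  have hstat : π ᵥ* Mmat R α β = π := funext hπstat
  set d : R → ℝ := π ∘ Units.mulRight u - π
  have hd_sum : ∑ c, d c = 0 := by
    simp only [d, Pi.sub_apply, sum_sub_distrib, Function.comp_apply, Equiv.sum_comp, sub_self]
  have hd : d = (1 - α) • d ᵥ* Bmat R β := by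
    rw [← vecMul_Mmat_of_sum_eq_zero α β hd_sum, sub_vecMul,
      comp_equiv_vecMul_of_submatrix_eq (Mmat_submatrix_mulRight α β u), hstat]
  have hd_zero := eq_zero_of_eq_smul_vecMul_of_mem_rowStochastic (Bmat_mem_rowStochastic hβ hβsum)
    (by rw [abs_of_nonneg (by linarith)]; linarith) hd
  exact (sub_eq_zero.mp (congrFun hd_zero a)).symm

/-- Elements generating the same principal ideal have the same stationary
probability. -/
theorem stmt13 (R : Type) [CommRing R] [Fintype R]
    (α : ℝ) (hα0 : 0 < α) (hα1 : α < 1)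
    (β : R → ℝ) (hβ : ∀ x, 0 ≤ β x) (hβsum : ∑ x, β x = 1)
    (π : R → ℝ) (hπ0 : ∀ x, 0 ≤ π x) (hπsum : ∑ x, π x = 1)
    (hπstat : ∀ b : R, ∑ a : R, π a * Mmat R α β a b = π b)
    (a b : R) (hab : Ideal.span ({a} : Set R) = Ideal.span {b}) :
    π a = π b :=
  stmt13_general R α hα0 hα1 β hβ hβsum π hπstat a b hab
end

section
/- Let π be a stationary distribution of M_R and let x ∈ R be a unit. Then π(x) = α / ( |R| · ( ∑_{y∈R, y not a unit} β(y) + α·∑_{y∈Rˣ} β(y) ) ). -/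
/-!
On the units the stationarity equation reads
`π z = α/|R| + (1-α) ∑_{y ∈ Rˣ} β y · π (z y⁻¹)`, because `a·y = z` with `z` a unit forces `y` to
be a unit and `a = z y⁻¹`. The right-hand side averages `π` over units with total weight
`(1-α)·β(Rˣ) < 1`, so comparing the maximum and the minimum of `π` on `Rˣ` shows that `π` is
constant there, equal to the unique fixed point `(α/|R|) / (1 - (1-α)·β(Rˣ))`.
-/

open Finset

open scoped Classical

section FixedPoint

variable {ι κ : Type*} {s : Finset ι} {t : Finset κ} {f : ι → ℝ} {w : κ → ℝ} {g : ι → κ → ι}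
  {c k : ℝ}

theorem le_div_of_forall_eq_add_mul_sum (hw : ∀ y ∈ t, 0 ≤ w y) (hk : 0 ≤ k)
    (hkw : k * ∑ y ∈ t, w y < 1) (hg : ∀ z ∈ s, ∀ y ∈ t, g z y ∈ s)
    (hf : ∀ z ∈ s, f z = c + k * ∑ y ∈ t, w y * f (g z y)) :
    ∀ z ∈ s, f z ≤ c / (1 - k * ∑ y ∈ t, w y) := by
  intro z hz
  obtain ⟨zM, hzM, hmax⟩ := exists_max_image s f ⟨z, hz⟩
  have hfzM : f zM ≤ c + k * ((∑ y ∈ t, w y) * f zM) := by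
    calc f zM = c + k * ∑ y ∈ t, w y * f (g zM y) := hf zM hzM
      _ ≤ c + k * ∑ y ∈ t, w y * f zM := by
          gcongr with y hy
          · exact hw y hy
          · exact hmax _ (hg zM hzM y hy)
      _ = c + k * ((∑ y ∈ t, w y) * f zM) := by rw [sum_mul]
  calc f z ≤ f zM := hmax z hz
    _ ≤ c / (1 - k * ∑ y ∈ t, w y) := by
        rw [le_div_iff₀ (by linarith)]
        linarith

theorem eq_div_of_forall_eq_add_mul_sum (hw : ∀ y ∈ t, 0 ≤ w y) (hk : 0 ≤ k)
    (hkw : k * ∑ y ∈ t, w y < 1) (hg : ∀ z ∈ s, ∀ y ∈ t, g z y ∈ s)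
    (hf : ∀ z ∈ s, f z = c + k * ∑ y ∈ t, w y * f (g z y)) :
    ∀ z ∈ s, f z = c / (1 - k * ∑ y ∈ t, w y) := by
  have hneg : ∀ z ∈ s, -f z = -c + k * ∑ y ∈ t, w y * -f (g z y) := by
    intro z hz
    simp only [hf z hz, mul_neg, sum_neg_distrib]
    ring
  intro z hz
  refine le_antisymm (le_div_of_forall_eq_add_mul_sum hw hk hkw hg hf z hz) ?_
  have hneg_le := le_div_of_forall_eq_add_mul_sum (f := fun z => -f z) hw hk hkw hg hneg z hz
  rw [neg_div] at hneg_le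
  linarith

end FixedPoint

section Stationary

variable {R : Type} [CommRing R] [Fintype R]

theorem sum_mul_Bmat_of_isUnit (β π : R → ℝ) {z : R} (hz : IsUnit z) :
    ∑ a, π a * Bmat R β a z = ∑ y ∈ univ.filter IsUnit, β y * π (z * Ring.inverse y) := by
  have hcol : ∀ y, ∑ a, π a * (if a * y = z then β y else 0) =
      if IsUnit y then β y * π (z * Ring.inverse y) else 0 := by
    intro y
    by_cases hy : IsUnit y
    · rw [if_pos hy]
      obtain ⟨u, rfl⟩ := hy
      simp_rw [Ring.inverse_unit, ← Units.eq_mul_inv_iff_mul_eq, mul_ite, mul_zero, sum_ite_eq',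
        mem_univ, if_true, mul_comm]
    · rw [if_neg hy]
      refine sum_eq_zero fun a _ => ?_
      rw [if_neg fun h => hy (isUnit_of_mul_isUnit_right (h ▸ hz)), mul_zero]
  simp only [Bmat, mul_sum, sum_filter]
  rw [sum_comm]
  exact sum_congr rfl fun y _ => hcol y

theorem sum_mul_Mmat (α : ℝ) (β π : R → ℝ) (b : R) :
    ∑ a, π a * Mmat R α β a b =
      α / Fintype.card R * ∑ a, π a + (1 - α) * ∑ a, π a * Bmat R β a b := by
  simp only [Mmat, mul_add, sum_add_distrib, mul_sum]
  congr 1 <;> exact sum_congr rfl fun a _ => by ring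

theorem eq_add_mul_sum_of_isUnit {α : ℝ} {β π : R → ℝ} (hπsum : ∑ x, π x = 1)
    (hπstat : ∀ b, ∑ a, π a * Mmat R α β a b = π b) {z : R} (hz : IsUnit z) :
    π z = α / Fintype.card R +
      (1 - α) * ∑ y ∈ univ.filter IsUnit, β y * π (z * Ring.inverse y) := by
  rw [← hπstat z, sum_mul_Mmat, hπsum, mul_one, sum_mul_Bmat_of_isUnit β π hz]

end Stationary

theorem stmt15_general (R : Type) [CommRing R] [Fintype R]
    (α : ℝ) (hα0 : 0 < α) (hα1 : α < 1)
    (β : R → ℝ) (hβ : ∀ x, 0 ≤ β x) (hβsum : ∑ x, β x = 1)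
    (π : R → ℝ) (hπsum : ∑ x, π x = 1)
    (hπstat : ∀ b : R, ∑ a : R, π a * Mmat R α β a b = π b)
    (x : R) (hx : IsUnit x) :
    π x = α / ((Fintype.card R : ℝ) *
      ((∑ y ∈ Finset.univ.filter (fun y => ¬ IsUnit y), β y) +
        α * ∑ y ∈ Finset.univ.filter (fun y => IsUnit y), β y)) := by
  set N := ∑ y ∈ univ.filter (fun y => ¬ IsUnit y), β y
  set B := ∑ y ∈ univ.filter IsUnit, β y
  have hN0 : 0 ≤ N := sum_nonneg fun y _ => hβ y
  have hB0 : 0 ≤ B := sum_nonneg fun y _ => hβ y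
  have hNB : N + B = 1 := by rw [add_comm, ← hβsum, sum_filter_add_sum_filter_not]
  have hπx := eq_div_of_forall_eq_add_mul_sum (s := univ.filter IsUnit)
    (g := fun z y => z * Ring.inverse y) (c := α / Fintype.card R) (k := 1 - α) (fun y _ => hβ y)
    (by linarith) (by nlinarith)
    (fun z hz y hy => by
      simp only [mem_filter, mem_univ, true_and] at hz hy ⊢
      exact hz.mul (isUnit_ringInverse.2 hy))
    (fun z hz => eq_add_mul_sum_of_isUnit hπsum hπstat (mem_filter.1 hz).2)
    x (by simpa using hx)
  rw [hπx, div_div, show N + α * B = 1 - (1 - α) * B by linarith]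

/-- The stationary probability of a unit:
`π(x) = α / ( |R|·( ∑_{y∉Rˣ} β(y) + α·∑_{y∈Rˣ} β(y) ) )`. -/
theorem stmt15 (R : Type) [CommRing R] [Fintype R]
    (α : ℝ) (hα0 : 0 < α) (hα1 : α < 1)
    (β : R → ℝ) (hβ : ∀ x, 0 ≤ β x) (hβsum : ∑ x, β x = 1)
    (π : R → ℝ) (hπ0 : ∀ x, 0 ≤ π x) (hπsum : ∑ x, π x = 1)
    (hπstat : ∀ b : R, ∑ a : R, π a * Mmat R α β a b = π b)
    (x : R) (hx : IsUnit x) :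
    π x = α / ((Fintype.card R : ℝ) *
      ((∑ y ∈ Finset.univ.filter (fun y => ¬ IsUnit y), β y) +
        α * ∑ y ∈ Finset.univ.filter (fun y => IsUnit y), β y)) :=
  stmt15_general R α hα0 hα1 β hβ hβsum π hπsum hπstat x hx
end

section
/- Let p be a prime, k ≥ 1, R = ℤ/p^kℤ, and suppose β(x) = 1/p^k for all x ∈ R. Define σ : R → ℝ by σ(0) = −(p−1), σ(t) = 1 if t ≠ 0 and t is a multiple of p^{k−1} in R, and σ(t) = 0 otherwise. Then σ, viewed as a row vector, is a left eigenvector of the transition matrix M_R with eigenvalue (1−α)(p−1)/p; that is, for every b ∈ R, ∑_{a∈R} σ(a)·M_R(a,b) = ((1−α)(p−1)/p)·σ(b). -/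
open Finset

open scoped Classical

/-!
Write `c = p^(k-1)`. Then `σ = 1_{cR} - p·δ₀`, and `cR` has exactly `p` elements, so
`∑ σ = 0` and the uniform part `α/|R|` of `M_R` contributes nothing. Expand `σ B_R` as a sum
over the multiplier `x`. When `x` is a unit, the fibre `{a | a x = b}` is the single point
`b x⁻¹`, and `σ` is invariant under units. When `x` is not a unit it is a multiple of `p`, so
it annihilates `cR ⊇ supp σ` and the fibre contributes `0` (or `∑ σ = 0` when `b = 0`). Hence
`σ B_R = (φ(p^k)/p^k) σ = ((p-1)/p) σ`.
-/

section LeftEigenvector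

variable {R : Type} [CommRing R] [Fintype R]

theorem sum_mul_Mmat_of_sum_eq_zero (α : ℝ) (β : R → ℝ) {σ : R → ℝ}
    (hσ : ∑ a, σ a = 0) (b : R) :
    ∑ a, σ a * Mmat R α β a b = (1 - α) * ∑ a, σ a * Bmat R β a b := by
  simp only [Mmat, mul_add, sum_add_distrib, ← sum_mul, hσ, zero_mul, zero_add, mul_sum]
  exact sum_congr rfl fun a _ => by ring

theorem sum_mul_Bmat (β σ : R → ℝ) (b : R) :
    ∑ a, σ a * Bmat R β a b = ∑ x, β x * ∑ a with a * x = b, σ a := by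
  simp only [Bmat, mul_sum, sum_filter]
  rw [sum_comm]
  exact sum_congr rfl fun x _ => sum_congr rfl fun a _ => by split_ifs <;> ring

theorem sum_filter_mul_unit_eq {σ : R → ℝ} (hσ : ∀ (u : Rˣ) a, σ (u * a) = σ a)
    (u : Rˣ) (b : R) : ∑ a with a * u = b, σ a = σ b := by
  have hfiber : ({a | a * u = b} : Finset R) = {b * ↑u⁻¹} := by
    ext a
    simp [Units.eq_mul_inv_iff_mul_eq]
  rw [hfiber, sum_singleton, mul_comm, hσ]

theorem sum_filter_mul_eq_zero {σ : R → ℝ} (hσ : ∑ a, σ a = 0) {x : R}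
    (hx : ∀ a, σ a ≠ 0 → a * x = 0) (b : R) : ∑ a with a * x = b, σ a = 0 := by
  rw [sum_filter]
  by_cases hb : b = 0
  · subst hb
    refine (sum_congr rfl fun a _ => ?_).trans hσ
    by_cases ha : σ a = 0 <;> simp [ha, hx]
  · refine sum_eq_zero fun a _ => ?_
    by_cases ha : σ a = 0 <;> simp [ha, hx a, Ne.symm hb]

theorem sum_mul_Mmat_eq (α : ℝ) (β : R → ℝ) {σ : R → ℝ}
    (hunits : ∀ (u : Rˣ) a, σ (u * a) = σ a) (hsum : ∑ a, σ a = 0)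
    (hann : ∀ x, ¬ IsUnit x → ∀ a, σ a ≠ 0 → a * x = 0) (b : R) :
    ∑ a, σ a * Mmat R α β a b = (1 - α) * (∑ x with IsUnit x, β x) * σ b := by
  have hfiber : ∀ x, ∑ a with a * x = b, σ a = if IsUnit x then σ b else 0 := by
    intro x
    split_ifs with hx
    · exact hx.unit_spec ▸ sum_filter_mul_unit_eq hunits hx.unit b
    · exact sum_filter_mul_eq_zero hsum (hann x hx) b
  simp only [sum_mul_Mmat_of_sum_eq_zero α β hsum, sum_mul_Bmat, hfiber, mul_ite, mul_zero,
    ← sum_filter, sum_mul, mul_assoc]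

theorem card_filter_isUnit_s18 [DecidablePred (IsUnit : R → Prop)] :
    #{x : R | IsUnit x} = Nat.card Rˣ := by
  calc #{x : R | IsUnit x} = #(univ.map ⟨Units.val, Units.val_injective⟩) := by
        congr 1
        ext x
        simp [IsUnit, eq_comm]
    _ = Nat.card Rˣ := by rw [card_map, card_univ, Nat.card_eq_fintype_card]

end LeftEigenvector

section MultiplesIndicator

variable {R : Type} [CommRing R]

noncomputable def multiplesIndicatorSub (c : R) (m : ℝ) (t : R) : ℝ :=
  (if c ∣ t then 1 else 0) - if t = 0 then m else 0

theorem multiplesIndicatorSub_units_mul (c : R) (m : ℝ) (u : Rˣ) (t : R) :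
    multiplesIndicatorSub c m (u * t) = multiplesIndicatorSub c m t := by
  simp [multiplesIndicatorSub, Units.mul_right_eq_zero]

theorem dvd_of_multiplesIndicatorSub_ne_zero {c : R} {m : ℝ} {t : R}
    (ht : multiplesIndicatorSub c m t ≠ 0) : c ∣ t := by
  by_contra hct
  have ht0 : t ≠ 0 := by rintro rfl; exact hct (dvd_zero c)
  simp [multiplesIndicatorSub, hct, ht0] at ht

theorem eq_multiplesIndicatorSub {c : R} {m : ℝ} {σ : R → ℝ} (h0 : σ 0 = 1 - m)
    (hdvd : ∀ t ≠ 0, c ∣ t → σ t = 1) (hndvd : ∀ t ≠ 0, ¬ c ∣ t → σ t = 0) :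
    σ = multiplesIndicatorSub c m := by
  funext t
  by_cases ht : t = 0
  · simp [ht, h0, multiplesIndicatorSub]
  by_cases hct : c ∣ t
  · simp [hdvd t ht hct, multiplesIndicatorSub, ht, hct]
  · simp [hndvd t ht hct, multiplesIndicatorSub, ht, hct]

theorem sum_multiplesIndicatorSub [Fintype R] (c : R) [DecidablePred (c ∣ ·)] (m : ℝ) :
    ∑ t, multiplesIndicatorSub c m t = #{t | c ∣ t} - m := by
  simp only [multiplesIndicatorSub, sum_sub_distrib, sum_ite_eq', mem_univ, if_true]
  congr 1
  -- the `if` in the definition carries the classical decidability instance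
  convert sum_boole (R := ℝ) (c ∣ ·) univ

end MultiplesIndicator

theorem ZMod.dvd_iff_mem_zmultiples {n : ℕ} (c t : ZMod n) :
    c ∣ t ↔ t ∈ AddSubgroup.zmultiples c := by
  rw [AddSubgroup.mem_zmultiples_iff]
  constructor
  · rintro ⟨s, rfl⟩
    exact ⟨s.cast, by rw [zsmul_eq_mul, mul_comm, ZMod.intCast_zmod_cast]⟩
  · rintro ⟨m, rfl⟩
    exact ⟨m, by rw [zsmul_eq_mul, mul_comm]⟩

theorem ZMod.card_filter_natCast_dvd (n d : ℕ) [NeZero n] (hd : d ∣ n) :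
    #{t : ZMod n | (d : ZMod n) ∣ t} = n / d := by
  rw [← Fintype.card_subtype, ← Nat.card_eq_fintype_card]
  simp_rw [ZMod.dvd_iff_mem_zmultiples]
  rw [Nat.card_zmultiples, ZMod.addOrderOf_coe _ (NeZero.ne n), Nat.gcd_eq_right hd]

theorem ZMod.pow_pred_mul_eq_zero_of_not_isUnit {p k : ℕ} (hp : p.Prime) (hk : 0 < k)
    {x : ZMod (p ^ k)} (hx : ¬ IsUnit x) : (p : ZMod (p ^ k)) ^ (k - 1) * x = 0 := by
  have : NeZero (p ^ k) := ⟨pow_ne_zero k hp.ne_zero⟩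
  rw [← ZMod.natCast_zmod_val x, ZMod.isUnit_natCast_iff_not_dvd_pow hp hk, not_not] at hx
  obtain ⟨m, hm⟩ := hx
  rw [← ZMod.natCast_zmod_val x, hm, Nat.cast_mul, ← mul_assoc, ← pow_succ,
    Nat.sub_add_cancel hk, ← Nat.cast_pow, ZMod.natCast_self, zero_mul]

theorem ZMod.card_units_prime_pow_div {p k : ℕ} (hp : p.Prime) (hk : 0 < k) :
    (Nat.card (ZMod (p ^ k))ˣ : ℝ) / p ^ k = (p - 1) / p := by
  have : NeZero (p ^ k) := ⟨pow_ne_zero k hp.ne_zero⟩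
  have hp0 : (p : ℝ) ≠ 0 := Nat.cast_ne_zero.mpr hp.ne_zero
  have hpow : (p : ℝ) ^ k = p ^ (k - 1) * p := by rw [← pow_succ, Nat.sub_add_cancel hk]
  rw [Nat.card_eq_fintype_card, ZMod.card_units_eq_totient, Nat.totient_prime_pow hp hk,
    Nat.cast_mul, Nat.cast_sub hp.one_le, Nat.cast_pow, Nat.cast_one, hpow]
  field_simp

theorem stmt18_general (p : ℕ) [hp : Fact p.Prime] (k : ℕ) (hk : 1 ≤ k)
    (α : ℝ)
    (β : ZMod (p ^ k) → ℝ) (hβ : ∀ x, β x = 1 / (p : ℝ) ^ k)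
    (σ : ZMod (p ^ k) → ℝ)
    (hσ0 : σ 0 = -((p : ℝ) - 1))
    (hσ1 : ∀ t : ZMod (p ^ k), t ≠ 0 →
      (∃ s : ZMod (p ^ k), t = (p : ZMod (p ^ k)) ^ (k - 1) * s) → σ t = 1)
    (hσ2 : ∀ t : ZMod (p ^ k), t ≠ 0 →
      (¬ ∃ s : ZMod (p ^ k), t = (p : ZMod (p ^ k)) ^ (k - 1) * s) → σ t = 0) :
    ∀ b : ZMod (p ^ k),
      ∑ a : ZMod (p ^ k), σ a * Mmat (ZMod (p ^ k)) α β a b =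
        (1 - α) * ((p : ℝ) - 1) / (p : ℝ) * σ b := by
  intro b
  have : NeZero (p ^ k) := ⟨pow_ne_zero k hp.out.ne_zero⟩
  set c : ZMod (p ^ k) := (p : ZMod (p ^ k)) ^ (k - 1) with hc
  obtain rfl : σ = multiplesIndicatorSub c p :=
    eq_multiplesIndicatorSub (by rw [hσ0]; ring) hσ1 hσ2
  have hsum : ∑ t, multiplesIndicatorSub c (p : ℝ) t = 0 := by
    rw [sum_multiplesIndicatorSub, hc, ← Nat.cast_pow,
      ZMod.card_filter_natCast_dvd _ _ (pow_dvd_pow p (Nat.sub_le k 1)),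
      Nat.pow_div (Nat.sub_le k 1) hp.out.pos, Nat.sub_sub_self hk, pow_one, sub_self]
  have hann : ∀ x : ZMod (p ^ k), ¬ IsUnit x → ∀ a, multiplesIndicatorSub c p a ≠ 0 →
      a * x = 0 := by
    intro x hx a ha
    obtain ⟨s, rfl⟩ := dvd_of_multiplesIndicatorSub_ne_zero ha
    rw [mul_right_comm, ZMod.pow_pred_mul_eq_zero_of_not_isUnit hp.out hk hx, zero_mul]
  rw [sum_mul_Mmat_eq α β (multiplesIndicatorSub_units_mul c p) hsum hann b]
  simp only [hβ, sum_const, card_filter_isUnit_s18, nsmul_eq_mul, mul_one_div,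
    ZMod.card_units_prime_pow_div hp.out hk]
  ring

/-- The vector `σ` with `σ(0) = −(p−1)`, `σ(t) = 1` for nonzero multiples `t` of
`p^{k−1}`, and `σ(t) = 0` otherwise, is a left eigenvector of the transition
matrix `M_R` on `ℤ/p^kℤ` with eigenvalue `(1−α)(p−1)/p`. -/
theorem stmt18 (p : ℕ) [hp : Fact p.Prime] (k : ℕ) (hk : 1 ≤ k)
    (α : ℝ) (hα0 : 0 < α) (hα1 : α < 1)
    (β : ZMod (p ^ k) → ℝ) (hβ : ∀ x, β x = 1 / (p : ℝ) ^ k)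
    (σ : ZMod (p ^ k) → ℝ)
    (hσ0 : σ 0 = -((p : ℝ) - 1))
    (hσ1 : ∀ t : ZMod (p ^ k), t ≠ 0 →
      (∃ s : ZMod (p ^ k), t = (p : ZMod (p ^ k)) ^ (k - 1) * s) → σ t = 1)
    (hσ2 : ∀ t : ZMod (p ^ k), t ≠ 0 →
      (¬ ∃ s : ZMod (p ^ k), t = (p : ZMod (p ^ k)) ^ (k - 1) * s) → σ t = 0) :
    ∀ b : ZMod (p ^ k),
      ∑ a : ZMod (p ^ k), σ a * Mmat (ZMod (p ^ k)) α β a b =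
        (1 - α) * ((p : ℝ) - 1) / (p : ℝ) * σ b :=
  stmt18_general p (hp := hp) k hk α β hβ σ hσ0 hσ1 hσ2
end
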